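/- arXiv:1108.4007 — 3 statements merged into one kernel-verified Lean document; each statement's English description precedes it below -/
import Mathlib

section
/- Let X be a zero-dimensional subscheme of P^1 × P^1 with Hilbert function M_X = (m_{ij}) and first difference ΔM_X = (c_{ij}) where c_{ij} = m_{ij} - m_{i-1,j} - m_{i,j-1} + m_{i-1,j-1}. Then c_{ij} ≤ 1 for all (i,j), and c_{ij} = 0 for i ≫ 0 or j ≫ 0. -/
/- Common setup: the bigraded coordinate ring of Q = P^1 x P^1, bigraded Hilbert
functions, point ideals, separators, minimal free resolutions, staircase (Ferrers)
configurations of reduced ACM schemes. -/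

open MvPolynomial

attribute [local instance] Classical.propDecidable

noncomputable section

/-- Variables of the bihomogeneous coordinate ring: `inl` = x₀,x₁ and `inr` = y₀,y₁. -/
abbrev BiVar := Fin 2 ⊕ Fin 2

/-- The bigraded coordinate ring S = k[x₀,x₁;y₀,y₁] of Q = P¹ × P¹. -/
abbrev S2 (k : Type) [Field k] := MvPolynomial BiVar k

/-- The bigrading weights: x-variables have degree (1,0), y-variables degree (0,1). -/
def bw : BiVar → ℕ × ℕ := Sum.elim (fun _ => (1, 0)) (fun _ => (0, 1))

/-- P¹ over k. -/
abbrev P1 (k : Type) [Field k] := Projectivization k (Fin 2 → k)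

/-- A point of Q = P¹ × P¹. -/
abbrev PtQ (k : Type) [Field k] := P1 k × P1 k

variable {k : Type} [Field k]

/-- Evaluation of a polynomial at (a representative of) a point of Q. -/
def evalPt (x : PtQ k) : S2 k →+* k :=
  MvPolynomial.eval (Sum.elim x.1.rep x.2.rep)

/-- An ideal is bihomogeneous if it contains all bihomogeneous components of its members. -/
def IsBihom (I : Ideal (S2 k)) : Prop :=
  ∀ f ∈ I, ∀ d : ℕ × ℕ, weightedHomogeneousComponent bw d f ∈ I

/-- Saturation with respect to the irrelevant ideal (x₀,x₁) ∩ (y₀,y₁). -/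
def IsSat (I : Ideal (S2 k)) : Prop :=
  ∀ f : S2 k, (∀ i j : Fin 2, X (Sum.inl i) * X (Sum.inr j) * f ∈ I) → f ∈ I

/-- The zero locus in Q of a (bihomogeneous) ideal. -/
def biZeroLocus (I : Ideal (S2 k)) : Set (PtQ k) :=
  {x | ∀ f ∈ I, ∀ d : ℕ × ℕ, evalPt x (weightedHomogeneousComponent bw d f) = 0}

/-- The (saturated) ideal of a point of Q: generated by the bihomogeneous forms vanishing there. -/
def pointIdeal (x : PtQ k) : Ideal (S2 k) :=
  Ideal.span {f | (∃ d : ℕ × ℕ, IsWeightedHomogeneous bw f d) ∧ evalPt x f = 0}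

/-- The saturated ideal of a reduced finite set of points of Q. -/
def idealOfFinset (Z : Finset (PtQ k)) : Ideal (S2 k) :=
  ⨅ x ∈ Z, pointIdeal x

/-- The bigraded piece of degree d of an ideal, as a k-subspace. -/
def Ipiece (I : Ideal (S2 k)) (d : ℕ × ℕ) : Submodule k (S2 k) :=
  (Submodule.restrictScalars k I) ⊓ weightedHomogeneousSubmodule k bw d

/-- The bigraded Hilbert function M_X(i,j) = dim S_{i,j} - dim (I_X)_{i,j}. -/
def hilb (I : Ideal (S2 k)) (i j : ℕ) : ℕ :=
  Module.finrank k (weightedHomogeneousSubmodule k bw ((i, j) : ℕ × ℕ)) -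
    Module.finrank k (Ipiece I (i, j))

/-- The Hilbert function extended by 0 to negative arguments. -/
def HM (I : Ideal (S2 k)) (i j : ℤ) : ℤ :=
  if 0 ≤ i ∧ 0 ≤ j then (hilb I i.toNat j.toNat : ℤ) else 0

/-- The first difference ΔM_X of the Hilbert function. -/
def ΔH (I : Ideal (S2 k)) (i j : ℤ) : ℤ :=
  HM I i j - HM I (i - 1) j - HM I i (j - 1) + HM I (i - 1) (j - 1)

/-- Index of a nonzero coordinate of a nonzero vector in k². -/
def pivot (v : Fin 2 → k) : Fin 2 := if v 0 ≠ 0 then 0 else 1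

/-- The other index. -/
def off : Fin 2 → Fin 2 := fun s => if s = 0 then 1 else 0

/-- Dehomogenization onto the affine chart around a point of Q. -/
def chartHom (x : PtQ k) : S2 k →+* MvPolynomial (Fin 2) k :=
  (aeval (R := k) (Sum.elim
    (fun i : Fin 2 => if i = pivot x.1.rep then 1 else X 0)
    (fun j : Fin 2 => if j = pivot x.2.rep then 1 else X 1))).toRingHom

/-- The affine coordinates of a point of Q in its chart. -/
def affPt (x : PtQ k) : Fin 2 → k := fun u =>
  if u = 0 then x.1.rep (off (pivot x.1.rep)) / x.1.rep (pivot x.1.rep)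
  else x.2.rep (off (pivot x.2.rep)) / x.2.rep (pivot x.2.rep)

/-- The multiplicity m_X(P): the length of the local ring O_{X,P}, computed in the
affine chart as the stable value of dim A/(I_aff + m_P^n). -/
def mult (I : Ideal (S2 k)) (x : PtQ k) : ℕ :=
  ⨆ n : ℕ, Module.finrank k
    (MvPolynomial (Fin 2) k ⧸
      (Ideal.map (chartHom x) I ⊔ (RingHom.ker (MvPolynomial.eval (affPt x))) ^ n))

/-- X is arithmetically Cohen–Macaulay: depth S(X) = 2, i.e. there is a regular
sequence of length two on S/I_X inside the maximal ideal of S. -/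
def IsACM (I : Ideal (S2 k)) : Prop :=
  ∃ f g : S2 k, constantCoeff f = 0 ∧ constantCoeff g = 0 ∧
    (∀ h : S2 k, f * h ∈ I → h ∈ I) ∧
    (∀ h : S2 k, g * h ∈ I ⊔ Ideal.span {f} → h ∈ I ⊔ Ideal.span {f})

/-- f is a separator of degree d for the point x relative to the residual scheme Z:
f is bihomogeneous of degree d, vanishes on Z, and is nonzero at x. -/
def IsSeparator (IZ : Ideal (S2 k)) (x : PtQ k) (f : S2 k) (d : ℕ × ℕ) : Prop :=
  IsWeightedHomogeneous bw f d ∧ f ∈ IZ ∧ evalPt x f ≠ 0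

/-- The set of separating degrees for x relative to Z. -/
def SepDegs (IZ : Ideal (S2 k)) (x : PtQ k) : Set (ℕ × ℕ) :=
  {d | ∃ f, IsSeparator IZ x f d}

/-- d is a minimal separating degree (componentwise partial order). -/
def IsMinSepDeg (IZ : Ideal (S2 k)) (x : PtQ k) (d : ℕ × ℕ) : Prop :=
  d ∈ SepDegs IZ x ∧ ∀ e ∈ SepDegs IZ x, ¬ e < d

/-- d is the unique minimal separating degree. -/
def UniqueMinSepDeg (IZ : Ideal (S2 k)) (x : PtQ k) (d : ℕ × ℕ) : Prop :=
  IsMinSepDeg IZ x d ∧ ∀ e, IsMinSepDeg IZ x e → e = d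

/-- f splits into a product of forms of degree (1,0) and (0,1), i.e. the curve f = 0
is a union of (1,0)- and (0,1)-lines. -/
def SplitsIntoLines (f : S2 k) : Prop :=
  ∃ L : Multiset (S2 k),
    (∀ l ∈ L, IsWeightedHomogeneous bw l ((1 : ℕ), (0 : ℕ)) ∨
      IsWeightedHomogeneous bw l ((0 : ℕ), (1 : ℕ))) ∧ f = L.prod

/-- `IsMFR3 I d0 d1 d2` : the ideal I has minimal bigraded free resolution
0 → ⊕ S(-d2 i) → ⊕ S(-d1 i) → ⊕ S(-d0 i) → I → 0, given by a minimal generating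
system of the listed degrees, a first-syzygy matrix A and a second-syzygy matrix B,
homogeneous of the appropriate degrees, with entries in the maximal ideal (minimality). -/
def IsMFR3 {ι₀ ι₁ ι₂ : Type} [Fintype ι₀] [Fintype ι₁] [Fintype ι₂]
    (I : Ideal (S2 k)) (d0 : ι₀ → ℕ × ℕ) (d1 : ι₁ → ℕ × ℕ) (d2 : ι₂ → ℕ × ℕ) : Prop :=
  ∃ (g : ι₀ → S2 k) (A : ι₁ → ι₀ → S2 k) (B : ι₂ → ι₁ → S2 k),
    (∀ i, IsWeightedHomogeneous bw (g i) (d0 i)) ∧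
    I = Ideal.span (Set.range g) ∧
    (∀ i j, A i j = 0 ∨ (d0 j ≤ d1 i ∧
      IsWeightedHomogeneous bw (A i j) ((d1 i).1 - (d0 j).1, (d1 i).2 - (d0 j).2))) ∧
    (∀ i j, constantCoeff (A i j) = 0) ∧
    (∀ i, ∑ j, A i j * g j = 0) ∧
    (∀ v : ι₀ → S2 k, ∑ j, v j * g j = 0 →
      ∃ c : ι₁ → S2 k, ∀ j, v j = ∑ i, c i * A i j) ∧
    (∀ i j, B i j = 0 ∨ (d1 j ≤ d2 i ∧
      IsWeightedHomogeneous bw (B i j) ((d2 i).1 - (d1 j).1, (d2 i).2 - (d1 j).2))) ∧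
    (∀ i j, constantCoeff (B i j) = 0) ∧
    (∀ i j, ∑ l, B i l * A l j = 0) ∧
    (∀ c : ι₁ → S2 k, (∀ j, ∑ i, c i * A i j = 0) →
      ∃ e : ι₂ → S2 k, ∀ i, c i = ∑ l, e l * B l i) ∧
    (∀ e : ι₂ → S2 k, (∀ i, ∑ l, e l * B l i = 0) → e = 0)

/-- A minimal free resolution of length 2 (the ACM case). -/
def IsMFR2 {ι₀ ι₁ : Type} [Fintype ι₀] [Fintype ι₁]
    (I : Ideal (S2 k)) (d0 : ι₀ → ℕ × ℕ) (d1 : ι₁ → ℕ × ℕ) : Prop :=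
  IsMFR3 I d0 d1 (fun e : Fin 0 => e.elim0)

/-- A reduced ACM zero-dimensional scheme in Q: points P_{ij} = R_i ∩ C_j indexed by a
lower-closed (staircase/Ferrers) diagram D in a grid of distinct (1,0)-lines R_i and
(0,1)-lines C_j, each containing at least one point of X. -/
structure Staircase (k : Type) [Field k] where
  a : ℕ
  b : ℕ
  R : ℕ → P1 k
  C : ℕ → P1 k
  hR : ∀ i ≤ a, ∀ i' ≤ a, R i = R i' → i = i'
  hC : ∀ j ≤ b, ∀ j' ≤ b, C j = C j' → j = j'
  D : Finset (ℕ × ℕ)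
  bound : ∀ p ∈ D, p.1 ≤ a ∧ p.2 ≤ b
  lower : ∀ p ∈ D, ∀ q : ℕ × ℕ, q.1 ≤ p.1 → q.2 ≤ p.2 → q ∈ D
  rows : ∀ i ≤ a, (i, 0) ∈ D
  cols : ∀ j ≤ b, (0, j) ∈ D

namespace Staircase

variable (T : Staircase k)

/-- The points of X. -/
def pts : Finset (PtQ k) := T.D.image (fun p => (T.R p.1, T.C p.2))

/-- The saturated ideal of X. -/
def ideal : Ideal (S2 k) := idealOfFinset T.pts

/-- #(X ∩ R_i). -/
def rowCount (i : ℕ) : ℕ := (T.D.filter (fun p => p.1 = i)).card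

/-- #(X ∩ C_j). -/
def colCount (j : ℕ) : ℕ := (T.D.filter (fun p => p.2 = j)).card

/-- (r,s) is a corner for X: P_{r-1,s}, P_{r,s-1} ∈ X but P_{r,s} ∉ X. -/
def IsCorner (r s : ℕ) : Prop :=
  0 < r ∧ 0 < s ∧ (r - 1, s) ∈ T.D ∧ (r, s - 1) ∈ T.D ∧ (r, s) ∉ T.D

/-- P_{ij} is an interior point of X: strictly dominated componentwise by some corner. -/
def Interior (i j : ℕ) : Prop :=
  (i, j) ∈ T.D ∧ ∃ r s, T.IsCorner r s ∧ i < r ∧ j < s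

/-- The saturated ideal of X minus the points of X indexed by E. -/
def residual (E : Finset (ℕ × ℕ)) : Ideal (S2 k) :=
  idealOfFinset ((T.D \ E).image (fun p => (T.R p.1, T.C p.2)))

end Staircase

/-- (i,j) is a vertex for a difference matrix c. -/
def IsVertexΔ (c : ℤ → ℤ → ℤ) (i j : ℤ) : Prop :=
  c (i - 1) j ≤ 0 ∧ c i (j - 1) ≤ 0 ∧ c (i - 1) (j - 1) = 1

/-- (i,j) is a corner for a difference matrix c. -/
def IsCornerΔ (c : ℤ → ℤ → ℤ) (i j : ℤ) : Prop :=
  c i j ≤ 0 ∧ c i (j - 1) = 1 ∧ c (i - 1) j = 1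

end

/-!
Choose forms `L` of bidegree `(1,0)` and `L'` of bidegree `(0,1)` vanishing at no point of `X`.
As `I_X` is saturated, both are nonzerodivisors on `S/I_X`. Exactness of the Koszul complex of
`L, L'` in the middle shows that `d ↦ dim (I_X)_d` has nonnegative first difference, while
`dim S_{i,j} = (i+1)(j+1)` has first difference `1` on the quadrant; hence `c_{ij} ≤ 1`.
Multiplication by `L` and `L'` makes `M_X` monotone in each variable. By the Nullstellensatz
`I_X + (L L')` contains a power of the irrelevant ideal, so multiplication by `L L'` is onto modulo
`I_X` in large bidegrees and `M_X` is bounded. A bounded monotone function on `ℕ²` is eventually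
constant in each variable, uniformly in the other, so `c_{ij} = 0` for `i ≫ 0` or `j ≫ 0`.
-/

namespace MvPolynomial

variable {σ R M : Type*} [AddCancelCommMonoid M] {w : σ → M} {m n : M}

theorem IsWeightedHomogeneous.weightedHomogeneousComponent_mul_right [CommSemiring R]
    {φ : MvPolynomial σ R} (hφ : IsWeightedHomogeneous w φ m) (ψ : MvPolynomial σ R) :
    weightedHomogeneousComponent w (n + m) (ψ * φ) = weightedHomogeneousComponent w n ψ * φ := by
  classical
  let _ := weightedGradedAlgebra R w
  rw [← weightedDecomposition.decompose'_apply, ← weightedDecomposition.decompose'_apply]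
  exact DirectSum.coe_decompose_mul_add_of_right_mem (weightedHomogeneousSubmodule R w) hφ

theorem IsWeightedHomogeneous.of_mul_right [CommRing R] [IsDomain R] {φ ψ : MvPolynomial σ R}
    (hφ : IsWeightedHomogeneous w φ m) (hφ0 : φ ≠ 0)
    (hψφ : IsWeightedHomogeneous w (ψ * φ) (n + m)) : IsWeightedHomogeneous w ψ n := by
  have h := hφ.weightedHomogeneousComponent_mul_right (n := n) ψ
  rw [weightedHomogeneousComponent_eq_self hψφ] at h
  rw [mul_right_cancel₀ hφ0 h]
  exact weightedHomogeneousComponent_isWeightedHomogeneous n ψ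

end MvPolynomial

open MvPolynomial Module

noncomputable section

variable {k : Type} [Field k]

lemma weight_bw (m : BiVar →₀ ℕ) :
    Finsupp.weight bw m = (m (.inl 0) + m (.inl 1), m (.inr 0) + m (.inr 1)) := by
  simp [Finsupp.weight_apply, Finsupp.sum_fintype, Fintype.sum_sum_type, bw, Prod.ext_iff]

/-- A monomial of bidegree `(i, j)` is determined by the exponents of `x₀` and `y₀`. -/
def bidegreeMonomialEquiv (i j : ℕ) :
    {m : BiVar →₀ ℕ | Finsupp.weight bw m = (i, j)} ≃ Fin (i + 1) × Fin (j + 1) where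
  toFun m :=
    have h := (weight_bw m.1).symm.trans m.2
    (⟨m.1 (.inl 0), by simp only [Prod.mk.injEq] at h; omega⟩,
      ⟨m.1 (.inr 0), by simp only [Prod.mk.injEq] at h; omega⟩)
  invFun p := ⟨Finsupp.equivFunOnFinite.symm (Sum.elim ![p.1, i - p.1] ![p.2, j - p.2]), by
    simp [weight_bw]; omega⟩
  left_inv m := by
    have h := (weight_bw m.1).symm.trans m.2
    simp only [Prod.mk.injEq] at h
    ext (a | a) <;> fin_cases a <;> simp <;> omega
  right_inv p := by simp

lemma finrank_weightedHomogeneousSubmodule_bw (i j : ℕ) :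
    finrank k (weightedHomogeneousSubmodule k bw (i, j)) = (i + 1) * (j + 1) := by
  let _ := Fintype.ofEquiv _ (bidegreeMonomialEquiv i j).symm
  rw [weightedHomogeneousSubmodule_eq_finsupp_supported,
    (AddMonoidAlgebra.supportedEquivFinsupp _).finrank_eq, finrank_finsupp_self,
    Fintype.card_congr (bidegreeMonomialEquiv i j)]
  simp

instance (d : ℕ × ℕ) : FiniteDimensional k (weightedHomogeneousSubmodule k bw d) := by
  rw [← d.eta]
  exact .of_finrank_pos (by rw [finrank_weightedHomogeneousSubmodule_bw]; positivity)

section BigradedPieces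

variable (I : Ideal (S2 k)) {L : S2 k} {e : ℕ × ℕ}

lemma Ipiece_le (d : ℕ × ℕ) : Ipiece I d ≤ weightedHomogeneousSubmodule k bw d := inf_le_right

instance (d : ℕ × ℕ) : FiniteDimensional k (Ipiece I d) :=
  Submodule.finiteDimensional_of_le (Ipiece_le I d)

lemma natCast_hilb (i j : ℕ) :
    (hilb I i j : ℤ) = (i + 1) * (j + 1) - finrank k (Ipiece I (i, j)) := by
  rw [hilb, Nat.cast_sub (Submodule.finrank_mono (Ipiece_le I _)),
    finrank_weightedHomogeneousSubmodule_bw]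
  push_cast
  ring

def idealForms (d : ℕ × ℕ) : Submodule k (weightedHomogeneousSubmodule k bw d) :=
  (Ipiece I d).comap (Submodule.subtype _)

lemma finrank_idealForms (d : ℕ × ℕ) : finrank k (idealForms I d) = finrank k (Ipiece I d) :=
  (Submodule.comapSubtypeEquivOfLe (Ipiece_le I d)).finrank_eq

lemma hilb_eq_finrank_quotient (d : ℕ × ℕ) :
    hilb I d.1 d.2 = finrank k (weightedHomogeneousSubmodule k bw d ⧸ idealForms I d) := by
  obtain ⟨i, j⟩ := d
  dsimp only
  have h := Submodule.finrank_quotient_add_finrank (idealForms I (i, j))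
  rw [finrank_idealForms] at h
  rw [hilb]
  omega

def mulForms (hL : IsWeightedHomogeneous bw L e) (d : ℕ × ℕ) :
    weightedHomogeneousSubmodule k bw d →ₗ[k] weightedHomogeneousSubmodule k bw (d + e) :=
  (LinearMap.mulRight k L ∘ₗ Submodule.subtype _).codRestrict _ fun f =>
    (mem_weightedHomogeneousSubmodule _ _ _ _).mpr (f.2.mul hL)

lemma idealForms_le_comap_mulForms (hL : IsWeightedHomogeneous bw L e) (d : ℕ × ℕ) :
    idealForms I d ≤ (idealForms I (d + e)).comap (mulForms hL d) :=
  fun f hf => ⟨I.mul_mem_right L hf.1, f.2.mul hL⟩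

def mulQuot (hL : IsWeightedHomogeneous bw L e) (d : ℕ × ℕ) :
    (weightedHomogeneousSubmodule k bw d ⧸ idealForms I d) →ₗ[k]
      (weightedHomogeneousSubmodule k bw (d + e) ⧸ idealForms I (d + e)) :=
  Submodule.mapQ _ _ (mulForms hL d) (idealForms_le_comap_mulForms I hL d)

lemma hilb_le_hilb_add (hL : IsWeightedHomogeneous bw L e) (hnzd : ∀ f, f * L ∈ I → f ∈ I)
    (i j : ℕ) : hilb I i j ≤ hilb I (i + e.1) (j + e.2) := by
  have h := LinearMap.finrank_le_finrank_of_injective (f := mulQuot I hL (i, j)) <| by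
    rw [← LinearMap.ker_eq_bot, mulQuot, Submodule.ker_mapQ, eq_bot_iff,
      ← Submodule.mkQ_map_self]
    exact Submodule.map_mono fun f hf => ⟨hnzd f hf.1, f.2⟩
  rwa [← hilb_eq_finrank_quotient, ← hilb_eq_finrank_quotient] at h

lemma exists_eq_add_mul_of_mem_sup (hbih : IsBihom I) (hL : IsWeightedHomogeneous bw L e)
    {d : ℕ × ℕ} {g : S2 k} (hg : IsWeightedHomogeneous bw g (d + e))
    (hgI : g ∈ I ⊔ Ideal.span {L}) :
    ∃ f c, f ∈ Ipiece I (d + e) ∧ IsWeightedHomogeneous bw c d ∧ g = f + c * L := by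
  obtain ⟨f, hf, _, hc, hfc⟩ := Submodule.mem_sup.mp hgI
  obtain ⟨c, rfl⟩ := Ideal.mem_span_singleton'.mp hc
  refine ⟨weightedHomogeneousComponent bw (d + e) f, weightedHomogeneousComponent bw d c,
    ⟨hbih f hf _, weightedHomogeneousComponent_isWeightedHomogeneous _ _⟩,
    weightedHomogeneousComponent_isWeightedHomogeneous _ _, ?_⟩
  rw [← hL.weightedHomogeneousComponent_mul_right, ← map_add, hfc,
    weightedHomogeneousComponent_eq_self hg]

lemma hilb_add_le_hilb (hbih : IsBihom I) (hL : IsWeightedHomogeneous bw L e) (i j : ℕ)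
    (hgen : ∀ g, IsWeightedHomogeneous bw g ((i, j) + e) → g ∈ I ⊔ Ideal.span {L}) :
    hilb I (i + e.1) (j + e.2) ≤ hilb I i j := by
  have h := LinearMap.finrank_le_finrank_of_surjective (f := mulQuot I hL (i, j)) <| by
    rw [← LinearMap.range_eq_top, mulQuot, Submodule.range_mapQ, Submodule.map_mkQ_eq_top,
      eq_top_iff]
    rintro g -
    obtain ⟨f, c, hf, hc, hg⟩ := exists_eq_add_mul_of_mem_sup I hbih hL g.2 (hgen g g.2)
    exact Submodule.mem_sup.mpr ⟨⟨f, hf.2⟩, hf, mulForms hL (i, j) ⟨c, hc⟩,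
      LinearMap.mem_range_self _ _, Subtype.ext hg.symm⟩
  rwa [← hilb_eq_finrank_quotient, ← hilb_eq_finrank_quotient] at h

def mulIpiece (hL : IsWeightedHomogeneous bw L e) (d : ℕ × ℕ) :
    Ipiece I d →ₗ[k] Ipiece I (d + e) :=
  (LinearMap.mulRight k L ∘ₗ Submodule.subtype _).codRestrict _ fun f =>
    ⟨I.mul_mem_right L f.2.1, f.2.2.mul hL⟩

lemma finrank_Ipiece_le_add (hL : IsWeightedHomogeneous bw L e) (hL0 : L ≠ 0) (d : ℕ × ℕ) :
    finrank k (Ipiece I d) ≤ finrank k (Ipiece I (d + e)) :=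
  LinearMap.finrank_le_finrank_of_injective (f := mulIpiece I hL d) fun _ _ h =>
    Subtype.ext (mul_right_cancel₀ hL0 (congrArg Subtype.val h))

/-- The Koszul complex `0 → I_d → I_{d+e'} ⊕ I_{d+e} → I_{d+e+e'}` of two coprime forms
`L, L'` is exact in the middle when `L` is a nonzerodivisor modulo `I`. -/
lemma finrank_Ipiece_add_add_le {L' : S2 k} {e' : ℕ × ℕ} (hL : IsWeightedHomogeneous bw L e)
    (hL' : IsWeightedHomogeneous bw L' e') (hLp : Prime L) (hLL' : ¬ L ∣ L')
    (hnzd : ∀ f, f * L ∈ I → f ∈ I) (d : ℕ × ℕ) :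
    finrank k (Ipiece I (d + e')) + finrank k (Ipiece I (d + e)) ≤
      finrank k (Ipiece I (d + e + e')) + finrank k (Ipiece I d) := by
  let φ : Ipiece I (d + e') × Ipiece I (d + e) →ₗ[k] Ipiece I (d + e + e') :=
    LinearMap.codRestrict _
      (LinearMap.mulRight k L ∘ₗ Submodule.subtype _ ∘ₗ LinearMap.fst k _ _ +
        LinearMap.mulRight k L' ∘ₗ Submodule.subtype _ ∘ₗ LinearMap.snd k _ _)
      fun p => ⟨I.add_mem (I.mul_mem_right L p.1.2.1) (I.mul_mem_right L' p.2.2.1),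
        ((add_right_comm d e' e ▸ p.1.2.2.mul hL).add (p.2.2.2.mul hL'))⟩
  let χ := (mulIpiece I hL' d).prod (-mulIpiece I hL d)
  have hexact : LinearMap.ker φ ≤ LinearMap.range χ := by
    rintro ⟨f, g⟩ hfg
    have hfg : (f : S2 k) * L + g * L' = 0 := congrArg Subtype.val hfg
    obtain ⟨c, hc⟩ : L ∣ g := (hLp.dvd_or_dvd ⟨-f, by linear_combination hfg⟩).resolve_right hLL'
    rw [mul_comm] at hc
    have hcd : IsWeightedHomogeneous bw c d := hL.of_mul_right hLp.ne_zero (hc ▸ g.2.2)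
    have hcI : c ∈ I := hnzd c (hc ▸ g.2.1)
    refine ⟨-⟨c, hcI, hcd⟩, Prod.ext (Subtype.ext ?_) (Subtype.ext ?_)⟩
    · apply mul_right_cancel₀ hLp.ne_zero
      change -c * L' * L = f * L
      linear_combination -hfg + L' * hc
    · change -(-c * L) = (g : S2 k)
      rw [neg_mul, neg_neg, hc]
  have hrank := LinearMap.finrank_range_add_finrank_ker φ
  have hker := (Submodule.finrank_mono hexact).trans (LinearMap.finrank_range_le χ)
  rw [Module.finrank_prod] at hrank
  linarith [Submodule.finrank_le (LinearMap.range φ)]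

end BigradedPieces

lemma Int.lt_zero_or_eq_zero_or_exists_eq_add_one (i : ℤ) :
    i < 0 ∨ i = 0 ∨ ∃ a : ℕ, i = a + 1 := by
  obtain ⟨n, rfl | rfl⟩ := Int.eq_nat_or_neg i
  · cases n <;> simp
  · cases n <;> simp; omega

def zeroExtend (g : ℕ → ℕ → ℤ) (i j : ℤ) : ℤ :=
  if 0 ≤ i ∧ 0 ≤ j then g i.toNat j.toNat else 0

def mixedDiff (f : ℤ → ℤ → ℤ) (i j : ℤ) : ℤ :=
  f i j - f (i - 1) j - f i (j - 1) + f (i - 1) (j - 1)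

section ZeroExtension

variable {g : ℕ → ℕ → ℤ} {i j : ℤ}

lemma zeroExtend_of_nonneg (hi : 0 ≤ i) (hj : 0 ≤ j) : zeroExtend g i j = g i.toNat j.toNat :=
  if_pos ⟨hi, hj⟩

lemma zeroExtend_of_neg_left (hi : i < 0) : zeroExtend g i j = 0 :=
  if_neg fun h => hi.not_ge h.1

lemma zeroExtend_of_neg_right (hj : j < 0) : zeroExtend g i j = 0 :=
  if_neg fun h => hj.not_ge h.2

lemma mixedDiff_zeroExtend_sub (g g' : ℕ → ℕ → ℤ) (i j : ℤ) :
    mixedDiff (zeroExtend fun a b => g a b - g' a b) i j =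
      mixedDiff (zeroExtend g) i j - mixedDiff (zeroExtend g') i j := by
  simp only [mixedDiff, zeroExtend]
  split_ifs <;> ring

lemma mixedDiff_zeroExtend_nonneg (h₀ : 0 ≤ g 0 0)
    (hx : ∀ i, g i 0 ≤ g (i + 1) 0) (hy : ∀ j, g 0 j ≤ g 0 (j + 1))
    (hxy : ∀ i j, g (i + 1) j + g i (j + 1) ≤ g (i + 1) (j + 1) + g i j) (i j : ℤ) :
    0 ≤ mixedDiff (zeroExtend g) i j := by
  obtain hi | rfl | ⟨a, rfl⟩ := i.lt_zero_or_eq_zero_or_exists_eq_add_one <;>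
  obtain hj | rfl | ⟨b, rfl⟩ := j.lt_zero_or_eq_zero_or_exists_eq_add_one <;>
  simp (disch := omega) [mixedDiff, zeroExtend_of_nonneg, zeroExtend_of_neg_left,
    zeroExtend_of_neg_right] <;>
  first | exact h₀ | exact hx _ | exact hy _ | linarith [hxy a b]

lemma mixedDiff_zeroExtend_le_one (i j : ℤ) :
    mixedDiff (zeroExtend fun a b => (a + 1) * (b + 1)) i j ≤ 1 := by
  obtain hi | rfl | ⟨a, rfl⟩ := i.lt_zero_or_eq_zero_or_exists_eq_add_one <;>
  obtain hj | rfl | ⟨b, rfl⟩ := j.lt_zero_or_eq_zero_or_exists_eq_add_one <;>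
  simp (disch := omega) [mixedDiff, zeroExtend_of_nonneg, zeroExtend_of_neg_left,
    zeroExtend_of_neg_right]
  linarith

lemma zeroExtend_flip : zeroExtend (flip g) i j = zeroExtend g j i := by
  simp [zeroExtend, flip, and_comm]

lemma mixedDiff_flip (f : ℤ → ℤ → ℤ) : mixedDiff (flip f) i j = mixedDiff f j i := by
  simp only [mixedDiff, flip]
  ring

lemma mixedDiff_zeroExtend_eq_zero_of_lt_left {N : ℕ} (hg : ∀ a ≥ N, ∀ b, g (a + 1) b = g a b)
    (hi : N < i) (j : ℤ) : mixedDiff (zeroExtend g) i j = 0 := by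
  have hstable : ∀ j, zeroExtend g i j = zeroExtend g (i - 1) j := fun j => by
    rcases lt_or_ge j 0 with hj | hj
    · simp [zeroExtend_of_neg_right hj]
    · rw [zeroExtend_of_nonneg (by omega) hj, zeroExtend_of_nonneg (by omega) hj,
        show i.toNat = (i - 1).toNat + 1 by omega, hg _ (by omega)]
  rw [mixedDiff, hstable, hstable (j - 1)]
  ring

lemma mixedDiff_zeroExtend_eq_zero {N : ℕ} (hx : ∀ a ≥ N, ∀ b, g (a + 1) b = g a b)
    (hy : ∀ b ≥ N, ∀ a, g a (b + 1) = g a b) (hij : N < i ∨ N < j) :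
    mixedDiff (zeroExtend g) i j = 0 := by
  rcases hij with hi | hj
  · exact mixedDiff_zeroExtend_eq_zero_of_lt_left hx hi j
  · have hflip : zeroExtend g = flip (zeroExtend (flip g)) := by
      ext i j
      exact zeroExtend_flip.symm
    rw [hflip, mixedDiff_flip]
    exact mixedDiff_zeroExtend_eq_zero_of_lt_left (fun b hb a => hy b hb a) hj i

end ZeroExtension

lemma exists_forall_le_of_bddAbove {α : Type*} [Nonempty α] {f : α → ℕ}
    (hb : BddAbove (Set.range f)) : ∃ x, ∀ y, f y ≤ f x := by
  obtain ⟨x, hx⟩ := Nat.sSup_mem (Set.range_nonempty f) hb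
  exact ⟨x, fun y => hx ▸ le_csSup hb ⟨y, rfl⟩⟩

lemma Monotone.exists_forall_succ_eq_of_bddAbove {f : ℕ × ℕ → ℕ} (hf : Monotone f)
    (hb : BddAbove (Set.range f)) : ∃ N, ∀ a ≥ N, ∀ b, f (a + 1, b) = f (a, b) := by
  obtain ⟨p, hp⟩ := exists_forall_le_of_bddAbove hb
  have htop : ∀ q, p ≤ q → f q = f p := fun q hq => le_antisymm (hp q) (hf hq)
  -- `f` is constant above `p`; the finitely many rows below `p.2` stabilize with their sum.
  let s a := ∑ b ∈ Finset.range p.2, f (a, b)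
  obtain ⟨M, hM⟩ := exists_forall_le_of_bddAbove (f := s)
    ⟨∑ _ ∈ Finset.range p.2, f p, by
      rintro _ ⟨a, rfl⟩
      exact Finset.sum_le_sum fun b _ => hp _⟩
  have hrow : ∀ a ≥ M, ∀ b < p.2, f (a, b) = f (M, b) := by
    intro a ha b hb
    have hle : ∀ b ∈ Finset.range p.2, f (M, b) ≤ f (a, b) := fun b _ => hf ⟨ha, le_rfl⟩
    exact ((Finset.sum_eq_sum_iff_of_le hle).mp
      (le_antisymm (Finset.sum_le_sum hle) (hM a)) b (Finset.mem_range.mpr hb)).symm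
  refine ⟨max M p.1, fun a ha b => ?_⟩
  rcases lt_or_ge b p.2 with hb | hb
  · rw [hrow a (by omega) b hb, hrow (a + 1) (by omega) b hb]
  · rw [htop (a + 1, b) ⟨by simp; omega, hb⟩, htop (a, b) ⟨by simp; omega, hb⟩]

section Geometry

variable {I : Ideal (S2 k)}

variable (k) in
def irrelevantIdeal : Ideal (S2 k) :=
  Ideal.span (Set.range fun ab : Fin 2 × Fin 2 => X (.inl ab.1) * X (.inr ab.2))

lemma IsSat.mem_of_irrelevantIdeal_pow_le_colon (hsat : IsSat I) (n : ℕ) {f : S2 k}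
    (h : irrelevantIdeal k ^ n ≤ I.colon (Ideal.span {f})) : f ∈ I := by
  induction n generalizing f with
  | zero =>
    simpa using Submodule.mem_colon_span_singleton.mp (h (by simp : (1 : S2 k) ∈ _))
  | succ n ih =>
    refine hsat f fun a b => ih fun g hg => Submodule.mem_colon_span_singleton.mpr ?_
    have hxy : X (.inl a) * X (.inr b) ∈ irrelevantIdeal k := Ideal.subset_span ⟨(a, b), rfl⟩
    have := Submodule.mem_colon_span_singleton.mp (h (pow_succ (irrelevantIdeal k) n ▸
      Ideal.mul_mem_mul hg hxy))
    simpa [smul_eq_mul, mul_assoc] using this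

lemma monomial_mem_irrelevantIdeal_pow {m : BiVar →₀ ℕ} {n : ℕ} {a b : Fin 2}
    (ha : n ≤ m (.inl a)) (hb : n ≤ m (.inr b)) (c : k) :
    monomial m c ∈ irrelevantIdeal k ^ n := by
  have hxy : X (.inl a) * X (.inr b) ∈ irrelevantIdeal k := Ideal.subset_span ⟨(a, b), rfl⟩
  refine Ideal.mem_of_dvd _ ?_ (Ideal.pow_mem_pow hxy n)
  rw [mul_pow, X_pow_eq_monomial, X_pow_eq_monomial, monomial_mul, one_mul,
    monomial_dvd_monomial]
  refine ⟨Or.inr fun v => ?_, one_dvd c⟩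
  rcases v with v | v <;> simp only [Finsupp.add_apply, Finsupp.single_apply] <;>
    split_ifs <;> simp_all

lemma mem_irrelevantIdeal_pow_of_isWeightedHomogeneous {f : S2 k} {i j n : ℕ}
    (hf : IsWeightedHomogeneous bw f (i, j)) (hi : 2 * n ≤ i) (hj : 2 * n ≤ j) :
    f ∈ irrelevantIdeal k ^ n := by
  rw [← support_sum_monomial_coeff f]
  refine Submodule.sum_mem _ fun m hm => ?_
  have hw := (weight_bw m).symm.trans (hf (mem_support_iff.mp hm))
  simp only [Prod.mk.injEq] at hw
  obtain ⟨a, ha⟩ : ∃ a, n ≤ m (.inl a) := by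
    by_contra! h
    have := h 0; have := h 1; omega
  obtain ⟨b, hb⟩ : ∃ b, n ≤ m (.inr b) := by
    by_contra! h
    have := h 0; have := h 1; omega
  exact monomial_mem_irrelevantIdeal_pow ha hb _

lemma eval_smul_smul_of_isWeightedHomogeneous {f : S2 k} {d : ℕ × ℕ}
    (hf : IsWeightedHomogeneous bw f d) (c c' : k) (A B : Fin 2 → k) :
    eval (Sum.elim (c • A) (c' • B)) f = c ^ d.1 * c' ^ d.2 * eval (Sum.elim A B) f := by
  rw [eval_eq', eval_eq', Finset.mul_sum]
  refine Finset.sum_congr rfl fun m hm => ?_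
  have hw := (weight_bw m).symm.trans (hf (mem_support_iff.mp hm))
  rw [← hw]
  simp only [Fintype.prod_sum_type, Fin.prod_univ_two, Sum.elim_inl, Sum.elim_inr,
    Pi.smul_apply, smul_eq_mul, mul_pow, pow_add]
  ring

lemma evalPt_mk_eq_zero_iff {f : S2 k} {d : ℕ × ℕ} (hf : IsWeightedHomogeneous bw f d)
    {A B : Fin 2 → k} (hA : A ≠ 0) (hB : B ≠ 0) :
    evalPt (.mk k A hA, .mk k B hB) f = 0 ↔ eval (Sum.elim A B) f = 0 := by
  obtain ⟨u, hu⟩ := (Projectivization.mk_eq_mk_iff k _ _ (Projectivization.rep_nonzero _) hA).mp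
    (Projectivization.mk_rep (.mk k A hA))
  obtain ⟨u', hu'⟩ := (Projectivization.mk_eq_mk_iff k _ _ (Projectivization.rep_nonzero _) hB).mp
    (Projectivization.mk_rep (.mk k B hB))
  rw [evalPt, ← hu, ← hu', Units.smul_def, Units.smul_def,
    eval_smul_smul_of_isWeightedHomogeneous hf]
  simp

variable [IsAlgClosed k] {J : Ideal (S2 k)} {L : S2 k} {e : ℕ × ℕ}

/-- By the Nullstellensatz, since `J` has no zeros in `Q`, its radical contains the irrelevant
ideal. -/
lemma exists_irrelevantIdeal_pow_le (hbih : IsBihom I) (hIJ : I ≤ J)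
    (hL : IsWeightedHomogeneous bw L e) (hLJ : L ∈ J)
    (hnv : ∀ P ∈ biZeroLocus I, evalPt P L ≠ 0) : ∃ n, irrelevantIdeal k ^ n ≤ J := by
  refine Ideal.exists_pow_le_of_le_radical_of_fg ?_ (Submodule.fg_span (Set.finite_range _))
  rw [irrelevantIdeal, Ideal.span_le]
  rintro _ ⟨⟨a, b⟩, rfl⟩
  rw [SetLike.mem_coe, ← vanishingIdeal_zeroLocus_eq_radical (K := k), mem_vanishingIdeal_iff]
  intro x hx
  rw [mem_zeroLocus_iff] at hx
  simp only [aeval_eq_eval, eval_mul, eval_X]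
  set A : Fin 2 → k := x ∘ Sum.inl
  set B : Fin 2 → k := x ∘ Sum.inr
  have hx' : x = Sum.elim A B := (Sum.elim_comp_inl_inr x).symm
  by_cases hA : A = 0
  · simp [show x (.inl a) = 0 from congrFun hA a]
  by_cases hB : B = 0
  · simp [show x (.inr b) = 0 from congrFun hB b]
  refine absurd ((evalPt_mk_eq_zero_iff hL hA hB).mpr ?_) (hnv _ fun f hf d => ?_)
  · simpa [← hx'] using hx L hLJ
  · rw [evalPt_mk_eq_zero_iff (weightedHomogeneousComponent_isWeightedHomogeneous d f) hA hB]
    simpa [← hx'] using hx _ (hIJ (hbih f hf d))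

lemma mem_of_mul_mem_of_forall_evalPt_ne_zero (hbih : IsBihom I) (hsat : IsSat I)
    (hL : IsWeightedHomogeneous bw L e) (hnv : ∀ P ∈ biZeroLocus I, evalPt P L ≠ 0)
    {f : S2 k} (hf : f * L ∈ I) : f ∈ I := by
  obtain ⟨n, hn⟩ := exists_irrelevantIdeal_pow_le (J := I.colon (Ideal.span {f})) hbih
    (fun g hg => Submodule.mem_colon_span_singleton.mpr (I.mul_mem_right f hg)) hL
    (Submodule.mem_colon_span_singleton.mpr (by rwa [smul_eq_mul, mul_comm])) hnv
  exact hsat.mem_of_irrelevantIdeal_pow_le_colon n hn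

lemma exists_forall_mem_sup_span_singleton (hbih : IsBihom I)
    (hL : IsWeightedHomogeneous bw L e) (hnv : ∀ P ∈ biZeroLocus I, evalPt P L ≠ 0) :
    ∃ E, ∀ i j, E ≤ i → E ≤ j → ∀ g : S2 k, IsWeightedHomogeneous bw g (i, j) →
      g ∈ I ⊔ Ideal.span {L} := by
  obtain ⟨n, hn⟩ := exists_irrelevantIdeal_pow_le hbih le_sup_left hL
    (Ideal.mem_sup_right (Ideal.mem_span_singleton_self L)) hnv
  exact ⟨2 * n, fun i j hi hj g hg =>
    hn (mem_irrelevantIdeal_pow_of_isWeightedHomogeneous hg hi hj)⟩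

end Geometry

section LinearForms

def linForm (s : Fin 2 → BiVar) (t : k) : S2 k := X (s 0) + C t * X (s 1)

lemma isWeightedHomogeneous_linForm {s : Fin 2 → BiVar} (hs : bw (s 0) = bw (s 1)) (t : k) :
    IsWeightedHomogeneous bw (linForm s t) (bw (s 0)) :=
  (isWeightedHomogeneous_X k bw _).add (hs ▸ (isWeightedHomogeneous_X k bw _).C_mul t)

lemma eval_linForm (x : BiVar → k) (s : Fin 2 → BiVar) (t : k) :
    eval x (linForm s t) = x (s 0) + t * x (s 1) := by
  simp [linForm]

lemma prime_linForm {s : Fin 2 → BiVar} (hs : Function.Injective s) (t : k) :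
    Prime (linForm s t) := by
  have hcoeff : coeff (Finsupp.single (s 0) 1) (linForm s t) = 1 := by
    simp [linForm, coeff_X, Finsupp.single_left_inj one_ne_zero, hs.ne one_ne_zero]
  refine (irreducible_of_totalDegree_eq_one (le_antisymm ?_ ?_) fun c hc => ?_).prime
  · refine (totalDegree_add _ _).trans (max_le (totalDegree_X _).le ?_)
    exact (totalDegree_mul _ _).trans (by simp)
  · exact (le_totalDegree (mem_support_iff.mpr (hcoeff ▸ one_ne_zero))).trans_eq' (by simp)
  · exact isUnit_of_dvd_one (hcoeff ▸ hc _)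

lemma linForm_inl_not_dvd_linForm_inr (t t' : k) :
    ¬ linForm Sum.inl t ∣ linForm Sum.inr t' := by
  rintro ⟨c, hc⟩
  have h := congrArg (aeval (R := k) (Sum.elim (0 : Fin 2 → S2 k) fun b => X (.inr b))) hc
  simp only [linForm, map_add, map_mul, aeval_X, aeval_C, Sum.elim_inl, Sum.elim_inr,
    Pi.zero_apply, mul_zero, add_zero, zero_mul] at h
  exact (prime_linForm Sum.inr_injective t').ne_zero h

lemma exists_forall_add_mul_ne_zero [Infinite k] {V : Set (Fin 2 → k)} (hV : V.Finite)
    (h0 : ∀ v ∈ V, v ≠ 0) : ∃ t : k, ∀ v ∈ V, v 0 + t * v 1 ≠ 0 := by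
  obtain ⟨t, ht⟩ := (hV.image fun v => -v 0 / v 1).infinite_compl.nonempty
  refine ⟨t, fun v hv h => ?_⟩
  by_cases h1 : v 1 = 0
  · exact h0 v hv (funext fun i => by fin_cases i <;> simp_all)
  · exact ht ⟨v, hv, by field_simp; linear_combination -h⟩

lemma exists_forall_evalPt_linForm_ne_zero [Infinite k] {Z : Set (PtQ k)} (hZ : Z.Finite) :
    ∃ t t' : k, ∀ P ∈ Z,
      evalPt P (linForm Sum.inl t) ≠ 0 ∧ evalPt P (linForm Sum.inr t') ≠ 0 := by
  obtain ⟨t, ht⟩ := exists_forall_add_mul_ne_zero (hZ.image fun P => P.1.rep)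
    (by rintro _ ⟨P, -, rfl⟩; exact P.1.rep_nonzero)
  obtain ⟨t', ht'⟩ := exists_forall_add_mul_ne_zero (hZ.image fun P => P.2.rep)
    (by rintro _ ⟨P, -, rfl⟩; exact P.2.rep_nonzero)
  refine ⟨t, t', fun P hP => ⟨?_, ?_⟩⟩ <;> rw [evalPt, eval_linForm]
  exacts [ht _ ⟨P, hP, rfl⟩, ht' _ ⟨P, hP, rfl⟩]

end LinearForms

section HilbertFunction

variable (I : Ideal (S2 k)) {L L' : S2 k}

lemma ΔH_eq_mixedDiff_zeroExtend_hilb :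
    ΔH I = mixedDiff (zeroExtend fun a b => (hilb I a b : ℤ)) := rfl

lemma ΔH_le_one (hL : IsWeightedHomogeneous bw L (1, 0))
    (hL' : IsWeightedHomogeneous bw L' (0, 1)) (hLp : Prime L) (hLL' : ¬ L ∣ L')
    (hnzd : ∀ f, f * L ∈ I → f ∈ I) (i j : ℤ) :
    ΔH I i j ≤ 1 := by
  have hd : 0 ≤ mixedDiff (zeroExtend fun a b => (finrank k (Ipiece I (a, b)) : ℤ)) i j := by
    refine mixedDiff_zeroExtend_nonneg (by positivity) (fun a => ?_) (fun b => ?_)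
      (fun a b => ?_) i j
    · have h := finrank_Ipiece_le_add I hL hLp.ne_zero (a, 0)
      simp only [Prod.mk_add_mk, Nat.add_zero] at h
      exact_mod_cast h
    · have h := finrank_Ipiece_le_add I hL' (fun h => hLL' (h ▸ dvd_zero L)) (0, b)
      simp only [Prod.mk_add_mk, Nat.add_zero] at h
      exact_mod_cast h
    · have h := finrank_Ipiece_add_add_le I hL hL' hLp hLL' hnzd (a, b)
      simp only [Prod.mk_add_mk, Nat.add_zero] at h
      omega
  rw [ΔH_eq_mixedDiff_zeroExtend_hilb]
  simp only [natCast_hilb]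
  rw [mixedDiff_zeroExtend_sub]
  linarith [mixedDiff_zeroExtend_le_one i j]

lemma monotone_hilb (hL : IsWeightedHomogeneous bw L (1, 0))
    (hL' : IsWeightedHomogeneous bw L' (0, 1)) (hnzd : ∀ f, f * L ∈ I → f ∈ I)
    (hnzd' : ∀ f, f * L' ∈ I → f ∈ I) : Monotone fun p : ℕ × ℕ => hilb I p.1 p.2 :=
  fun p q hpq =>
    (monotone_nat_of_le_succ (fun a => hilb_le_hilb_add I hL hnzd a p.2) hpq.1).trans
      (monotone_nat_of_le_succ (fun b => hilb_le_hilb_add I hL' hnzd' q.1 b) hpq.2)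

lemma bddAbove_range_hilb (hbih : IsBihom I) (hmono : Monotone fun p : ℕ × ℕ => hilb I p.1 p.2)
    {F : S2 k} (hF : IsWeightedHomogeneous bw F (1, 1)) {E : ℕ}
    (hE : ∀ i j, E ≤ i → E ≤ j → ∀ g, IsWeightedHomogeneous bw g (i, j) →
      g ∈ I ⊔ Ideal.span {F}) :
    BddAbove (Set.range fun p : ℕ × ℕ => hilb I p.1 p.2) := by
  have hdiag : ∀ n, hilb I (E + n) (E + n) ≤ hilb I E E := by
    intro n
    induction n with
    | zero => rfl
    | succ n ih =>
      exact (hilb_add_le_hilb I hbih hF (E + n) (E + n) fun g hg =>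
        hE _ _ (by simp; omega) (by simp; omega) g hg).trans ih
  refine ⟨hilb I E E, ?_⟩
  rintro _ ⟨⟨a, b⟩, rfl⟩
  exact (hmono (show (a, b) ≤ (E + (a + b), E + (a + b)) from ⟨by omega, by omega⟩)).trans
    (hdiag _)

lemma exists_ΔH_eq_zero (hmono : Monotone fun p : ℕ × ℕ => hilb I p.1 p.2)
    (hbdd : BddAbove (Set.range fun p : ℕ × ℕ => hilb I p.1 p.2)) :
    ∃ N : ℤ, ∀ i j : ℤ, (N ≤ i ∨ N ≤ j) → ΔH I i j = 0 := by
  obtain ⟨N₁, h₁⟩ := hmono.exists_forall_succ_eq_of_bddAbove hbdd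
  have hmono' : Monotone fun p : ℕ × ℕ => hilb I p.2 p.1 := fun p q hpq =>
    @hmono p.swap q.swap ⟨hpq.2, hpq.1⟩
  have hbdd' : BddAbove (Set.range fun p : ℕ × ℕ => hilb I p.2 p.1) := by
    refine hbdd.mono ?_
    rintro _ ⟨p, rfl⟩
    exact ⟨p.swap, rfl⟩
  obtain ⟨N₂, h₂⟩ := hmono'.exists_forall_succ_eq_of_bddAbove hbdd'
  refine ⟨(max N₁ N₂ : ℕ) + 1, fun i j hij => ?_⟩
  rw [ΔH_eq_mixedDiff_zeroExtend_hilb]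
  refine mixedDiff_zeroExtend_eq_zero (N := max N₁ N₂) (fun a ha b => ?_) (fun b hb a => ?_)
    (by omega)
  · exact congrArg Nat.cast (h₁ a (le_of_max_le_left ha) b)
  · exact congrArg Nat.cast (h₂ b (le_of_max_le_right hb) a)

end HilbertFunction

end

theorem stmt1_general (k : Type) [Field k] [IsAlgClosed k]
    (I : Ideal (S2 k)) (hbih : IsBihom I) (hsat : IsSat I)
    (hfin : (biZeroLocus I).Finite) :
    (∀ i j : ℤ, ΔH I i j ≤ 1) ∧
    ∃ N : ℤ, ∀ i j : ℤ, (N ≤ i ∨ N ≤ j) → ΔH I i j = 0 := by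
  obtain ⟨t, t', ht⟩ := exists_forall_evalPt_linForm_ne_zero hfin
  have hL : IsWeightedHomogeneous bw (linForm Sum.inl t) (1, 0) :=
    isWeightedHomogeneous_linForm rfl t
  have hL' : IsWeightedHomogeneous bw (linForm Sum.inr t') (0, 1) :=
    isWeightedHomogeneous_linForm rfl t'
  have hnzd := fun f => mem_of_mul_mem_of_forall_evalPt_ne_zero (f := f) hbih hsat hL
    fun P hP => (ht P hP).1
  have hnzd' := fun f => mem_of_mul_mem_of_forall_evalPt_ne_zero (f := f) hbih hsat hL'
    fun P hP => (ht P hP).2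
  have hmono := monotone_hilb I hL hL' hnzd hnzd'
  obtain ⟨E, hE⟩ := exists_forall_mem_sup_span_singleton hbih (hL.mul hL')
    fun P hP => by rw [map_mul]; exact mul_ne_zero (ht P hP).1 (ht P hP).2
  exact ⟨ΔH_le_one I hL hL' (prime_linForm Sum.inl_injective t)
      (linForm_inl_not_dvd_linForm_inr t t') hnzd,
    exists_ΔH_eq_zero I hmono (bddAbove_range_hilb I hbih hmono (hL.mul hL') hE)⟩

/-- c_{ij} ≤ 1 everywhere and c_{ij} = 0 for i ≫ 0 or j ≫ 0. -/
theorem stmt1 (k : Type) [Field k] [IsAlgClosed k]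
    (I : Ideal (S2 k)) (hbih : IsBihom I) (hsat : IsSat I) (hne : I ≠ ⊤)
    (hfin : (biZeroLocus I).Finite) :
    (∀ i j : ℤ, ΔH I i j ≤ 1) ∧
    ∃ N : ℤ, ∀ i j : ℤ, (N ≤ i ∨ N ≤ j) → ΔH I i j = 0 :=
  stmt1_general k I hbih hsat hfin
end

section
/- Let X be a zero-dimensional subscheme of P^1 × P^1, P ∈ X a point with multiplicity m_X(P) = 1, and Z = X \ {P}. Then (r,s) is the unique minimal separating degree for P in X if and only if the Hilbert functions satisfy: H_Z(i,j) = H_X(i,j) whenever (i,j) is not ≥ (r,s) componentwise, and H_Z(i,j) = H_X(i,j) − 1 whenever i ≥ r and j ≥ s. -/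
/- Common setup: the bigraded coordinate ring of Q = P^1 x P^1, bigraded Hilbert
functions, point ideals, separators, minimal free resolutions, staircase (Ferrers)
configurations of reduced ACM schemes. -/

open MvPolynomial

attribute [local instance] Classical.propDecidable

/- Evaluation at P is a linear functional on each bigraded piece of I_Z, and its kernel there is
the corresponding piece of I_Z ∩ I_P. Hence H_X - H_Z is the indicator function of the set of
separating degrees, which is an upper set because a separator stays a separator after
multiplication by forms not vanishing at P. An upper set in ℕ² has the unique minimal element
(r, s) exactly when it is the quadrant (r, s) + ℕ². -/

open Module

theorem Submodule.finrank_inf_ker_add_one {K V : Type*} [Field K] [AddCommGroup V] [Module K V]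
    {W : Submodule K V} [FiniteDimensional K W] {φ : Dual K V} (h : ∃ w ∈ W, φ w ≠ 0) :
    finrank K ↥(W ⊓ LinearMap.ker φ) + 1 = finrank K W := by
  have hφ : φ.domRestrict W ≠ 0 := by
    obtain ⟨w, hw, hφw⟩ := h
    exact fun h0 => hφw (LinearMap.congr_fun h0 ⟨w, hw⟩)
  rw [← Submodule.map_comap_subtype, Submodule.finrank_map_subtype_eq,
    ← LinearMap.ker_domRestrict]
  exact Dual.finrank_ker_add_one_of_ne_zero hφ

theorem Set.uniqueMinimal_iff_eq_Ici {α : Type*} [PartialOrder α] [WellFoundedLT α] {U : Set α}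
    (hU : IsUpperSet U) (a : α) :
    (Minimal (· ∈ U) a ∧ ∀ b, Minimal (· ∈ U) b → b = a) ↔ U = Set.Ici a := by
  constructor
  · rintro ⟨ha, huniq⟩
    ext b
    refine ⟨fun hb => ?_, fun hab => hU hab ha.prop⟩
    obtain ⟨c, hcb, hc⟩ := exists_minimal_le_of_wellFoundedLT (· ∈ U) b hb
    exact huniq c hc ▸ hcb
  · rintro rfl
    exact ⟨minimal_ge_iff.2 rfl, fun b => minimal_ge_iff.1⟩

variable {k : Type} [Field k]

theorem weight_bw_fst_add_snd (m : BiVar →₀ ℕ) :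
    (Finsupp.weight bw m).1 + (Finsupp.weight bw m).2 = Finsupp.weight 1 m := by
  simp [Finsupp.weight_eq_sum, Fintype.sum_sum_type, bw]

instance inst_s5 (d : ℕ × ℕ) : FiniteDimensional k (weightedHomogeneousSubmodule k bw d) := by
  have hfin : {m : BiVar →₀ ℕ | Finsupp.weight bw m = d}.Finite :=
    (Finsupp.finite_of_nat_weight_eq 1 (fun _ => one_ne_zero) (d.1 + d.2)).subset
      fun m (hm : Finsupp.weight bw m = d) => by
        show Finsupp.weight 1 m = d.1 + d.2
        rw [← weight_bw_fst_add_snd, hm]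
  have := hfin.to_subtype
  rw [weightedHomogeneousSubmodule_eq_finsupp_supported]
  exact Module.Finite.of_basis (basisRestrictSupport k _)

instance (I : Ideal (S2 k)) (d : ℕ × ℕ) : FiniteDimensional k (Ipiece I d) :=
  Submodule.finiteDimensional_of_le inf_le_right

noncomputable def evalPtₗ (x : PtQ k) : Dual k (S2 k) :=
  (aeval (Sum.elim x.1.rep x.2.rep)).toLinearMap

@[simp] theorem evalPtₗ_apply (x : PtQ k) (f : S2 k) : evalPtₗ x f = evalPt x f := by
  simp [evalPtₗ, evalPt]

theorem mem_pointIdeal_iff {x : PtQ k} {f : S2 k} {d : ℕ × ℕ}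
    (hf : IsWeightedHomogeneous bw f d) :
    f ∈ pointIdeal x ↔ evalPt x f = 0 := by
  refine ⟨fun h => ?_, fun h => Ideal.subset_span ⟨⟨d, hf⟩, h⟩⟩
  have hle : pointIdeal x ≤ RingHom.ker (evalPt x) := Ideal.span_le.2 fun g hg => hg.2
  exact hle h

theorem Ipiece_inf_pointIdeal (IZ : Ideal (S2 k)) (x : PtQ k) (d : ℕ × ℕ) :
    Ipiece (IZ ⊓ pointIdeal x) d = Ipiece IZ d ⊓ LinearMap.ker (evalPtₗ x) := by
  ext f
  simp only [Ipiece, Submodule.mem_inf, Submodule.restrictScalars_mem,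
    LinearMap.mem_ker, evalPtₗ_apply, mem_weightedHomogeneousSubmodule]
  constructor
  · rintro ⟨⟨hfZ, hfx⟩, hf⟩
    exact ⟨⟨hfZ, hf⟩, (mem_pointIdeal_iff hf).1 hfx⟩
  · rintro ⟨⟨hfZ, hf⟩, hfx⟩
    exact ⟨⟨hfZ, (mem_pointIdeal_iff hf).2 hfx⟩, hf⟩

theorem mem_sepDegs_iff (IZ : Ideal (S2 k)) (x : PtQ k) (d : ℕ × ℕ) :
    d ∈ SepDegs IZ x ↔ ∃ f ∈ Ipiece IZ d, evalPtₗ x f ≠ 0 := by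
  simp only [SepDegs, IsSeparator, Ipiece, Submodule.mem_inf, Submodule.restrictScalars_mem,
    mem_weightedHomogeneousSubmodule, evalPtₗ_apply]
  exact exists_congr fun f => by tauto

theorem hilb_inf_pointIdeal (IZ : Ideal (S2 k)) (x : PtQ k) (i j : ℕ) :
    hilb (IZ ⊓ pointIdeal x) i j = hilb IZ i j + if (i, j) ∈ SepDegs IZ x then 1 else 0 := by
  have hle :
      finrank k (Ipiece IZ (i, j)) ≤ finrank k (weightedHomogeneousSubmodule k bw (i, j)) :=
    Submodule.finrank_mono inf_le_right
  rw [hilb, hilb, Ipiece_inf_pointIdeal]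
  split_ifs with hsep
  · have := Submodule.finrank_inf_ker_add_one ((mem_sepDegs_iff IZ x (i, j)).1 hsep)
    omega
  · have hker : Ipiece IZ (i, j) ≤ LinearMap.ker (evalPtₗ x) := fun f hf => by
      by_contra hfx
      exact hsep ((mem_sepDegs_iff IZ x (i, j)).2 ⟨f, hf, hfx⟩)
    rw [inf_eq_left.2 hker, add_zero]

theorem isUpperSet_sepDegs (IZ : Ideal (S2 k)) (x : PtQ k) : IsUpperSet (SepDegs IZ x) := by
  rintro d e ⟨hde₁, hde₂⟩ ⟨f, hf, hfZ, hfx⟩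
  obtain ⟨i, hi⟩ := Function.ne_iff.1 x.1.rep_nonzero
  obtain ⟨j, hj⟩ := Function.ne_iff.1 x.2.rep_nonzero
  refine ⟨X (Sum.inl i) ^ (e.1 - d.1) * X (Sum.inr j) ^ (e.2 - d.2) * f, ?_,
    Ideal.mul_mem_left _ _ hfZ, ?_⟩
  · convert (((isWeightedHomogeneous_X k bw _).pow _).mul
      ((isWeightedHomogeneous_X k bw _).pow _)).mul hf using 1
    ext <;> simp [bw] <;> omega
  · simp_all [evalPt]

theorem isMinSepDeg_iff (IZ : Ideal (S2 k)) (x : PtQ k) (d : ℕ × ℕ) :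
    IsMinSepDeg IZ x d ↔ Minimal (· ∈ SepDegs IZ x) d := by
  rw [minimal_iff_forall_lt, IsMinSepDeg]
  exact and_congr_right' ⟨fun h _ hlt he => h _ he hlt, fun h _ he hlt => h hlt he⟩

theorem uniqueMinSepDeg_iff (IZ : Ideal (S2 k)) (x : PtQ k) (d : ℕ × ℕ) :
    UniqueMinSepDeg IZ x d ↔ SepDegs IZ x = Set.Ici d := by
  simp only [UniqueMinSepDeg, isMinSepDeg_iff]
  exact Set.uniqueMinimal_iff_eq_Ici (isUpperSet_sepDegs IZ x) d

theorem stmt5_general (k : Type) [Field k]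
    (IZ : Ideal (S2 k)) (x : PtQ k)
    (I : Ideal (S2 k)) (hI : I = IZ ⊓ pointIdeal x)
    (r s : ℕ) :
    UniqueMinSepDeg IZ x (r, s) ↔
      ∀ i j : ℕ,
        ((r ≤ i ∧ s ≤ j) → (hilb IZ i j : ℤ) = (hilb I i j : ℤ) - 1) ∧
        (¬ (r ≤ i ∧ s ≤ j) → hilb IZ i j = hilb I i j) := by
  subst hI
  rw [uniqueMinSepDeg_iff, Set.ext_iff, Prod.forall]
  refine forall₂_congr fun i j => ?_
  rw [hilb_inf_pointIdeal, Set.mem_Ici, Prod.mk_le_mk]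
  by_cases hsep : (i, j) ∈ SepDegs IZ x <;>
    simp only [hsep, if_true, if_false, true_iff, false_iff] <;> omega

/-- for P ∈ X with m_X(P) = 1 and Z = X \ {P}, (r,s) is the unique minimal
separating degree for P iff H_Z agrees with H_X off the shifted quadrant (r,s) + ℕ²
and equals H_X − 1 on it. -/
theorem stmt5 (k : Type) [Field k] [IsAlgClosed k]
    (IZ : Ideal (S2 k)) (hbih : IsBihom IZ) (hsat : IsSat IZ)
    (hfin : (biZeroLocus IZ).Finite) (x : PtQ k)
    (hx : ¬ IZ ≤ pointIdeal x)
    (I : Ideal (S2 k)) (hI : I = IZ ⊓ pointIdeal x)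
    (r s : ℕ) :
    UniqueMinSepDeg IZ x (r, s) ↔
      ∀ i j : ℕ,
        ((r ≤ i ∧ s ≤ j) → (hilb IZ i j : ℤ) = (hilb I i j : ℤ) - 1) ∧
        (¬ (r ≤ i ∧ s ≤ j) → hilb IZ i j = hilb I i j) :=
  stmt5_general k IZ x I hI r s
end

section
/- Let X be a reduced ACM zero-dimensional subscheme of P^1 × P^1 and let P = R ∩ C ∈ X, where R is a (1,0)-line and C a (0,1)-line. Let p + 1 = deg(X ∩ R) and q + 1 = deg(X ∩ C). Then (q,p) is the unique minimal separating degree for P in X, and a separator of degree (q,p) can be chosen to be a product of linear forms, i.e., a curve that is a union of (1,0)- and (0,1)-lines. -/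
/- Common setup: the bigraded coordinate ring of Q = P^1 x P^1, bigraded Hilbert
functions, point ideals, separators, minimal free resolutions, staircase (Ferrers)
configurations of reduced ACM schemes. -/

open MvPolynomial

attribute [local instance] Classical.propDecidable

/-! ### Auxiliary development for Statement 9 -/

section Aux9

open MvPolynomial

attribute [local instance] Classical.propDecidable

lemma weight_one_fin2 (m : Fin 2 →₀ ℕ) :
    (Finsupp.weight (1 : Fin 2 → ℕ) m : ℕ) = m 0 + m 1 := by
  rw [Finsupp.weight_apply, Finsupp.sum_fintype _ _ (fun i => by simp), Fin.sum_univ_two]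
  simp

lemma weight_bw_fst_support (m : BiVar →₀ ℕ) :
    ∑ i ∈ m.support, m i * (bw i).1 = (Finsupp.weight bw m).1 := by
  rw [Finsupp.weight_apply, Finsupp.sum, Prod.fst_sum]
  refine Finset.sum_congr rfl fun i _ => ?_
  simp

lemma weight_bw_snd_support (m : BiVar →₀ ℕ) :
    ∑ i ∈ m.support, m i * (bw i).2 = (Finsupp.weight bw m).2 := by
  rw [Finsupp.weight_apply, Finsupp.sum, Prod.snd_sum]
  refine Finset.sum_congr rfl fun i _ => ?_
  simp

variable {k : Type} [Field k]

lemma fin2_cases {v : Fin 2 → k} (hv : v ≠ 0) : v 0 ≠ 0 ∨ v 1 ≠ 0 := by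
  by_contra h
  push_neg at h
  exact hv (funext fun i => by fin_cases i <;> simp [h.1, h.2])

lemma P1_eq_of_smul {x y : P1 k} {s : k} (hs : s ≠ 0) (h : x.rep = s • y.rep) : x = y := by
  conv_lhs => rw [← x.mk_rep]
  conv_rhs => rw [← y.mk_rep]
  rw [Projectivization.mk_eq_mk_iff]
  exact ⟨Units.mk0 s hs, by simpa [Units.smul_def] using h.symm⟩

lemma rep0_ne {x : P1 k} (h1 : x.rep 1 = 0) : x.rep 0 ≠ 0 := by
  rcases fin2_cases (Projectivization.rep_nonzero x) with h | h
  · exact h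
  · exact absurd h1 h

lemma rep_eq_smul10 {x : P1 k} (h1 : x.rep 1 = 0) : x.rep = x.rep 0 • ![1, 0] := by
  funext i; fin_cases i <;> simp [h1]

lemma rep_eq_smul_of_one_ne {x : P1 k} (h1 : x.rep 1 ≠ 0) :
    x.rep = x.rep 1 • ![x.rep 0 / x.rep 1, 1] := by
  funext i; fin_cases i <;> simp <;> field_simp

lemma fin2_funext {v w : Fin 2 → k} (h0 : v 0 = w 0) (h1 : v 1 = w 1) :
    v = w :=
  funext fun i => by fin_cases i <;> assumption

lemma det_ne_zero {x y : P1 k} (hxy : x ≠ y) :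
    y.rep 1 * x.rep 0 - y.rep 0 * x.rep 1 ≠ 0 := by
  intro h
  apply hxy
  have hx := Projectivization.rep_nonzero x
  rcases fin2_cases (Projectivization.rep_nonzero y) with h0 | h1
  · have hx0 : x.rep 0 ≠ 0 := by
      intro hx0
      have h1' : y.rep 0 * x.rep 1 = 0 := by linear_combination y.rep 1 * hx0 - h
      have hx1 : x.rep 1 = 0 := by
        rcases mul_eq_zero.mp h1' with hh | hh
        · exact absurd hh h0
        · exact hh
      exact hx (fin2_funext (by simpa using hx0) (by simpa using hx1))
    refine P1_eq_of_smul (s := x.rep 0 / y.rep 0) (div_ne_zero hx0 h0) (fin2_funext ?_ ?_)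
    · simp only [Pi.smul_apply, smul_eq_mul]
      field_simp
    · simp only [Pi.smul_apply, smul_eq_mul]
      field_simp
      linear_combination -h
  · have hx1 : x.rep 1 ≠ 0 := by
      intro hx1
      have h1' : y.rep 1 * x.rep 0 = 0 := by linear_combination h + y.rep 0 * hx1
      have hx0 : x.rep 0 = 0 := by
        rcases mul_eq_zero.mp h1' with hh | hh
        · exact absurd hh h1
        · exact hh
      exact hx (fin2_funext (by simpa using hx0) (by simpa using hx1))
    refine P1_eq_of_smul (s := x.rep 1 / y.rep 1) (div_ne_zero hx1 h1) (fin2_funext ?_ ?_)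
    · simp only [Pi.smul_apply, smul_eq_mul]
      field_simp
      linear_combination h
    · simp only [Pi.smul_apply, smul_eq_mul]
      field_simp

/-- Dehomogenization of a binary form. -/
noncomputable def dehom (g : MvPolynomial (Fin 2) k) : Polynomial k :=
  MvPolynomial.aeval ![Polynomial.X, 1] g

lemma dehom_eval (t : k) (g : MvPolynomial (Fin 2) k) :
    (dehom g).eval t = eval ![t, 1] g := by
  induction g using MvPolynomial.induction_on with
  | C a => simp [dehom]
  | add f g hf hg =>
    simp only [dehom] at hf hg ⊢
    rw [map_add, map_add, Polynomial.eval_add, hf, hg]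
  | mul_X f n hf =>
    simp only [dehom] at hf ⊢
    rw [map_mul, map_mul, Polynomial.eval_mul, hf]
    fin_cases n <;> simp

lemma dehom_sum (g : MvPolynomial (Fin 2) k) :
    dehom g = ∑ m ∈ g.support, Polynomial.C (coeff m g) * Polynomial.X ^ (m 0) := by
  conv_lhs => rw [g.as_sum]
  rw [dehom, map_sum]
  refine Finset.sum_congr rfl fun m _ => ?_
  rw [aeval_monomial, Finsupp.prod_fintype _ _ (fun i => pow_zero _), Fin.prod_univ_two]
  simp [Polynomial.algebraMap_eq]

lemma dehom_natDegree {g : MvPolynomial (Fin 2) k} {c : ℕ} (hg : g.IsHomogeneous c) :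
    (dehom g).natDegree ≤ c := by
  rw [dehom_sum]
  apply Polynomial.natDegree_sum_le_of_forall_le
  intro m hm
  refine (Polynomial.natDegree_C_mul_le _ _).trans ?_
  rw [Polynomial.natDegree_X_pow]
  have := hg (mem_support_iff.mp hm)
  rw [weight_one_fin2] at this
  omega

lemma dehom_coeff_top {g : MvPolynomial (Fin 2) k} {c : ℕ} (hg : g.IsHomogeneous c) :
    (dehom g).coeff c = eval ![1, 0] g := by
  rw [dehom_sum, Polynomial.finset_sum_coeff, eval_eq']
  refine Finset.sum_congr rfl fun m hm => ?_
  have hmc : m 0 + m 1 = c := by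
    have := hg (mem_support_iff.mp hm); rwa [weight_one_fin2] at this
  rw [Polynomial.coeff_C_mul, Polynomial.coeff_X_pow, Fin.prod_univ_two]
  simp only [Matrix.cons_val_zero, Matrix.cons_val_one, Matrix.head_cons, one_pow, one_mul]
  by_cases h : m 1 = 0
  · have : c = m 0 := by omega
    simp [h, this]
  · have : ¬ c = m 0 := by omega
    simp [h, this, zero_pow]

lemma eval_smul_homog {g : MvPolynomial (Fin 2) k} {c : ℕ} (hg : g.IsHomogeneous c)
    (s : k) (x : Fin 2 → k) : eval (s • x) g = s ^ c * eval x g := by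
  rw [eval_eq', eval_eq', Finset.mul_sum]
  refine Finset.sum_congr rfl fun m hm => ?_
  have hmc : m 0 + m 1 = c := by
    have := hg (mem_support_iff.mp hm); rwa [weight_one_fin2] at this
  rw [Fin.prod_univ_two, Fin.prod_univ_two]
  simp only [Pi.smul_apply, smul_eq_mul, mul_pow]
  rw [← hmc, pow_add]; ring

lemma binCount {g : MvPolynomial (Fin 2) k} {c : ℕ} (hg : g.IsHomogeneous c)
    {V : Finset (P1 k)} (hvan : ∀ x ∈ V, eval x.rep g = 0)
    {w : P1 k} (hw : w ∉ V) (hnz : eval w.rep g ≠ 0) : V.card ≤ c := by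
  classical
  set p := dehom g with hpdef
  have hdn : p.natDegree ≤ c := by rw [hpdef]; exact dehom_natDegree hg
  have hval : ∀ x : P1 k, x.rep 1 ≠ 0 →
      eval x.rep g = (x.rep 1) ^ c * p.eval (x.rep 0 / x.rep 1) := by
    intro x hx1
    rw [hpdef, dehom_eval]
    conv_lhs => rw [rep_eq_smul_of_one_ne hx1]
    rw [eval_smul_homog hg]
  have hval0 : ∀ x : P1 k, x.rep 1 = 0 →
      eval x.rep g = (x.rep 0) ^ c * p.coeff c := by
    intro x hx1
    rw [hpdef, dehom_coeff_top hg]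
    conv_lhs => rw [rep_eq_smul10 hx1]
    rw [eval_smul_homog hg]
  set V1 := V.filter (fun x => x.rep 1 ≠ 0) with hV1
  set V0 := V.filter (fun x => ¬ x.rep 1 ≠ 0) with hV0
  have hcards : V1.card + V0.card = V.card :=
    Finset.card_filter_add_card_filter_not (p := fun x : P1 k => x.rep 1 ≠ 0)
  have hroot : ∀ x ∈ V1, p.eval (x.rep 0 / x.rep 1) = 0 := by
    intro x hx
    obtain ⟨hxV, hx1⟩ := Finset.mem_filter.mp hx
    have hz := hvan x hxV
    rw [hval x hx1] at hz
    exact (mul_eq_zero.mp hz).resolve_left (pow_ne_zero _ hx1)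
  have hinj : Set.InjOn (fun x : P1 k => x.rep 0 / x.rep 1) V1 := by
    intro x hx y hy hxy
    obtain ⟨_, hx1⟩ := Finset.mem_filter.mp hx
    obtain ⟨_, hy1⟩ := Finset.mem_filter.mp hy
    simp only at hxy
    apply P1_eq_of_smul (div_ne_zero hx1 hy1)
    calc x.rep = x.rep 1 • ![x.rep 0 / x.rep 1, 1] := rep_eq_smul_of_one_ne hx1
      _ = x.rep 1 • ![y.rep 0 / y.rep 1, 1] := by rw [hxy]
      _ = (x.rep 1 / y.rep 1) • (y.rep 1 • ![y.rep 0 / y.rep 1, 1]) := by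
          rw [smul_smul, div_mul_cancel₀ _ hy1]
      _ = (x.rep 1 / y.rep 1) • y.rep := by rw [← rep_eq_smul_of_one_ne hy1]
  have count : ∀ n : ℕ, p ≠ 0 → p.natDegree ≤ n → V1.card ≤ n := by
    intro n hp hn
    have hsub : V1.image (fun x => x.rep 0 / x.rep 1) ⊆ p.roots.toFinset := by
      intro r hr
      obtain ⟨x, hx, rfl⟩ := Finset.mem_image.mp hr
      rw [Multiset.mem_toFinset, Polynomial.mem_roots hp]
      exact hroot x hx
    calc V1.card = (V1.image (fun x => x.rep 0 / x.rep 1)).card :=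
          (Finset.card_image_of_injOn hinj).symm
      _ ≤ p.roots.toFinset.card := Finset.card_le_card hsub
      _ ≤ Multiset.card p.roots := p.roots.toFinset_card_le
      _ ≤ p.natDegree := p.card_roots'
      _ ≤ n := hn
  by_cases hV0e : V0.Nonempty
  · obtain ⟨x0, hx0⟩ := hV0e
    obtain ⟨hx0V, hx01'⟩ := Finset.mem_filter.mp hx0
    have hx01 : x0.rep 1 = 0 := not_not.mp hx01'
    have hc0 : p.coeff c = 0 := by
      have hz := hvan x0 hx0V
      rw [hval0 x0 hx01] at hz
      exact (mul_eq_zero.mp hz).resolve_left (pow_ne_zero _ (rep0_ne hx01))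
    have hw1 : w.rep 1 ≠ 0 := by
      intro hw1
      apply hw
      have hwx : w = x0 := by
        apply P1_eq_of_smul (div_ne_zero (rep0_ne hw1) (rep0_ne hx01))
        calc w.rep = w.rep 0 • ![1, 0] := rep_eq_smul10 hw1
          _ = (w.rep 0 / x0.rep 0) • (x0.rep 0 • ![1, 0]) := by
              rw [smul_smul, div_mul_cancel₀ _ (rep0_ne hx01)]
          _ = (w.rep 0 / x0.rep 0) • x0.rep := by rw [← rep_eq_smul10 hx01]
      rw [hwx]; exact hx0V
    have hpe : p.eval (w.rep 0 / w.rep 1) ≠ 0 := by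
      intro hz; apply hnz; rw [hval w hw1, hz, mul_zero]
    have hp : p ≠ 0 := fun hz => hpe (by rw [hz]; simp)
    have hcpos : 1 ≤ c := by
      by_contra hc
      have hc' : c = 0 := by omega
      subst hc'
      have h00 : p.natDegree = 0 := Nat.le_zero.mp hdn
      have := Polynomial.eq_C_of_natDegree_eq_zero h00
      rw [hc0] at this
      exact hp (by rw [this, map_zero])
    have hdeg : p.natDegree ≤ c - 1 := by
      by_contra hd
      have hdc : p.natDegree = c := by omega
      have hlc := Polynomial.leadingCoeff_ne_zero.mpr hp
      rw [Polynomial.leadingCoeff, hdc, hc0] at hlc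
      exact hlc rfl
    have hV1c : V1.card ≤ c - 1 := count _ hp hdeg
    have hV0c : V0.card ≤ 1 := by
      refine Finset.card_le_one.mpr fun x hx y hy => ?_
      obtain ⟨_, hx1'⟩ := Finset.mem_filter.mp hx
      obtain ⟨_, hy1'⟩ := Finset.mem_filter.mp hy
      have hx1 := not_not.mp hx1'
      have hy1 := not_not.mp hy1'
      apply P1_eq_of_smul (div_ne_zero (rep0_ne hx1) (rep0_ne hy1))
      calc x.rep = x.rep 0 • ![1, 0] := rep_eq_smul10 hx1
        _ = (x.rep 0 / y.rep 0) • (y.rep 0 • ![1, 0]) := by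
            rw [smul_smul, div_mul_cancel₀ _ (rep0_ne hy1)]
        _ = (x.rep 0 / y.rep 0) • y.rep := by rw [← rep_eq_smul10 hy1]
    omega
  · have hV0c : V0.card = 0 := by
      rw [Finset.card_eq_zero, ← Finset.not_nonempty_iff_eq_empty]
      exact hV0e
    have hp : p ≠ 0 := by
      by_cases hw1 : w.rep 1 ≠ 0
      · intro hz
        apply hnz
        rw [hval w hw1, hz]
        simp
      · intro hz
        apply hnz
        rw [hval0 w (not_not.mp hw1), hz]
        simp
    have := count c hp hdn
    omega

/-- Substitution of the y-variables. -/
noncomputable def pushX (u : Fin 2 → k) : S2 k →ₐ[k] MvPolynomial (Fin 2) k :=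
  MvPolynomial.aeval (Sum.elim X (fun j => C (u j)))

/-- Substitution of the x-variables. -/
noncomputable def pushY (u : Fin 2 → k) : S2 k →ₐ[k] MvPolynomial (Fin 2) k :=
  MvPolynomial.aeval (Sum.elim (fun i => C (u i)) X)

lemma pushX_eval (u v : Fin 2 → k) (f : S2 k) :
    eval v (pushX u f) = eval (Sum.elim v u) f := by
  induction f using MvPolynomial.induction_on with
  | C a => simp [pushX]
  | add f g hf hg => rw [map_add, map_add, map_add, hf, hg]
  | mul_X f n hf =>
    rw [map_mul, map_mul, map_mul, hf]
    cases n with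
    | inl i => simp [pushX]
    | inr j => simp [pushX]

lemma pushY_eval (u v : Fin 2 → k) (f : S2 k) :
    eval v (pushY u f) = eval (Sum.elim u v) f := by
  induction f using MvPolynomial.induction_on with
  | C a => simp [pushY]
  | add f g hf hg => rw [map_add, map_add, map_add, hf, hg]
  | mul_X f n hf =>
    rw [map_mul, map_mul, map_mul, hf]
    cases n with
    | inl i => simp [pushY]
    | inr j => simp [pushY]

lemma pushX_hom {u : Fin 2 → k} {f : S2 k} {c d : ℕ}
    (hf : IsWeightedHomogeneous bw f (c, d)) : (pushX u f).IsHomogeneous c := by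
  have hsum : pushX u f = ∑ m ∈ f.support, pushX u (monomial m (coeff m f)) := by
    rw [← map_sum, ← f.as_sum]
  rw [hsum]
  apply IsHomogeneous.sum
  intro m hm
  have hwm := hf (mem_support_iff.mp hm)
  have hc : ∑ i ∈ m.support, m i * (bw i).1 = c := by
    rw [weight_bw_fst_support, hwm]
  rw [pushX, aeval_monomial, MvPolynomial.algebraMap_eq]
  have hprod : IsHomogeneous
      (Finsupp.prod m fun i e => (Sum.elim X (fun j => C (u j)) : BiVar → MvPolynomial (Fin 2) k) i ^ e)
      (∑ i ∈ m.support, m i * (bw i).1) := by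
    apply IsHomogeneous.prod
    intro i _
    cases i with
    | inl i' => simpa [bw] using isHomogeneous_X_pow (R := k) i' (m (Sum.inl i'))
    | inr j' => simpa [bw] using (isHomogeneous_C (Fin 2) (u j')).pow (m (Sum.inr j'))
  rw [← hc]
  exact hprod.C_mul _

lemma pushY_hom {u : Fin 2 → k} {f : S2 k} {c d : ℕ}
    (hf : IsWeightedHomogeneous bw f (c, d)) : (pushY u f).IsHomogeneous d := by
  have hsum : pushY u f = ∑ m ∈ f.support, pushY u (monomial m (coeff m f)) := by
    rw [← map_sum, ← f.as_sum]
  rw [hsum]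
  apply IsHomogeneous.sum
  intro m hm
  have hwm := hf (mem_support_iff.mp hm)
  have hc : ∑ i ∈ m.support, m i * (bw i).2 = d := by
    rw [weight_bw_snd_support, hwm]
  rw [pushY, aeval_monomial, MvPolynomial.algebraMap_eq]
  have hprod : IsHomogeneous
      (Finsupp.prod m fun i e => (Sum.elim (fun i => C (u i)) X : BiVar → MvPolynomial (Fin 2) k) i ^ e)
      (∑ i ∈ m.support, m i * (bw i).2) := by
    apply IsHomogeneous.prod
    intro i _
    cases i with
    | inl i' => simpa [bw] using (isHomogeneous_C (Fin 2) (u i')).pow (m (Sum.inl i'))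
    | inr j' => simpa [bw] using isHomogeneous_X_pow (R := k) j' (m (Sum.inr j'))
  rw [← hc]
  exact hprod.C_mul _

/-- A (1,0)-line through a given point of P¹ (in the x-variables). -/
noncomputable def linx (v : Fin 2 → k) : S2 k :=
  C (v 1) * X (Sum.inl 0) - C (v 0) * X (Sum.inl 1)

/-- A (0,1)-line through a given point of P¹ (in the y-variables). -/
noncomputable def liny (v : Fin 2 → k) : S2 k :=
  C (v 1) * X (Sum.inr 0) - C (v 0) * X (Sum.inr 1)

lemma linx_hom (v : Fin 2 → k) :
    IsWeightedHomogeneous bw (linx v) (((1 : ℕ), (0 : ℕ))) := by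
  rw [← mem_weightedHomogeneousSubmodule]
  apply Submodule.sub_mem
  · rw [← smul_eq_C_mul]
    exact Submodule.smul_mem _ _ (by
      rw [mem_weightedHomogeneousSubmodule]
      exact isWeightedHomogeneous_X k bw (Sum.inl 0))
  · rw [← smul_eq_C_mul]
    exact Submodule.smul_mem _ _ (by
      rw [mem_weightedHomogeneousSubmodule]
      exact isWeightedHomogeneous_X k bw (Sum.inl 1))

lemma liny_hom (v : Fin 2 → k) :
    IsWeightedHomogeneous bw (liny v) (((0 : ℕ), (1 : ℕ))) := by
  rw [← mem_weightedHomogeneousSubmodule]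
  apply Submodule.sub_mem
  · rw [← smul_eq_C_mul]
    exact Submodule.smul_mem _ _ (by
      rw [mem_weightedHomogeneousSubmodule]
      exact isWeightedHomogeneous_X k bw (Sum.inr 0))
  · rw [← smul_eq_C_mul]
    exact Submodule.smul_mem _ _ (by
      rw [mem_weightedHomogeneousSubmodule]
      exact isWeightedHomogeneous_X k bw (Sum.inr 1))

lemma eval_linx (v : Fin 2 → k) (g : BiVar → k) :
    eval g (linx v) = v 1 * g (Sum.inl 0) - v 0 * g (Sum.inl 1) := by
  simp [linx]

lemma eval_liny (v : Fin 2 → k) (g : BiVar → k) :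
    eval g (liny v) = v 1 * g (Sum.inr 0) - v 0 * g (Sum.inr 1) := by
  simp [liny]

lemma sep_col_bound (T : Staircase k) {i0 j0 : ℕ} (h0 : (i0, j0) ∈ T.D)
    {f : S2 k} {c d : ℕ} (hf : IsWeightedHomogeneous bw f (c, d))
    (hvan : ∀ pr ∈ T.D, pr ≠ (i0, j0) → evalPt (T.R pr.1, T.C pr.2) f = 0)
    (hnz : evalPt (T.R i0, T.C j0) f ≠ 0) :
    ((T.D.filter fun pr => pr.2 = j0).erase (i0, j0)).card ≤ c := by
  classical
  set A' := (T.D.filter fun pr => pr.2 = j0).erase (i0, j0) with hA'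
  have hmemA' : ∀ pr ∈ A', pr.1 ≠ i0 ∧ pr.2 = j0 ∧ pr ∈ T.D := by
    intro pr hpr
    obtain ⟨hne, hfil⟩ := Finset.mem_erase.mp hpr
    obtain ⟨hD, hj⟩ := Finset.mem_filter.mp hfil
    exact ⟨fun h => hne (Prod.ext h hj), hj, hD⟩
  have hgh : (pushX (T.C j0).rep f).IsHomogeneous c := pushX_hom hf
  have hinj : Set.InjOn (fun pr : ℕ × ℕ => T.R pr.1) A' := by
    intro x hx y hy hxy
    obtain ⟨_, hx2, hxD⟩ := hmemA' x hx
    obtain ⟨_, hy2, hyD⟩ := hmemA' y hy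
    have h1 := T.hR x.1 (T.bound x hxD).1 y.1 (T.bound y hyD).1 hxy
    exact Prod.ext h1 (hx2.trans hy2.symm)
  have hwnot : T.R i0 ∉ A'.image (fun pr => T.R pr.1) := by
    intro hmem
    obtain ⟨pr, hpr, heq⟩ := Finset.mem_image.mp hmem
    obtain ⟨h1, _, hD⟩ := hmemA' pr hpr
    exact h1 (T.hR pr.1 (T.bound pr hD).1 i0 (T.bound _ h0).1 heq)
  have hV : ∀ x ∈ A'.image (fun pr => T.R pr.1), eval x.rep (pushX (T.C j0).rep f) = 0 := by
    intro x hx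
    obtain ⟨pr, hpr, rfl⟩ := Finset.mem_image.mp hx
    obtain ⟨h1, h2, hD⟩ := hmemA' pr hpr
    rw [pushX_eval]
    have hz := hvan pr hD (fun h => h1 (by rw [h]))
    rw [← h2]
    exact hz
  have hnz' : eval (T.R i0).rep (pushX (T.C j0).rep f) ≠ 0 := by
    rw [pushX_eval]; exact hnz
  have := binCount hgh hV hwnot hnz'
  rwa [Finset.card_image_of_injOn hinj] at this

lemma sep_row_bound (T : Staircase k) {i0 j0 : ℕ} (h0 : (i0, j0) ∈ T.D)
    {f : S2 k} {c d : ℕ} (hf : IsWeightedHomogeneous bw f (c, d))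
    (hvan : ∀ pr ∈ T.D, pr ≠ (i0, j0) → evalPt (T.R pr.1, T.C pr.2) f = 0)
    (hnz : evalPt (T.R i0, T.C j0) f ≠ 0) :
    ((T.D.filter fun pr => pr.1 = i0).erase (i0, j0)).card ≤ d := by
  classical
  set B' := (T.D.filter fun pr => pr.1 = i0).erase (i0, j0) with hB'
  have hmemB' : ∀ pr ∈ B', pr.2 ≠ j0 ∧ pr.1 = i0 ∧ pr ∈ T.D := by
    intro pr hpr
    obtain ⟨hne, hfil⟩ := Finset.mem_erase.mp hpr
    obtain ⟨hD, hi⟩ := Finset.mem_filter.mp hfil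
    exact ⟨fun h => hne (Prod.ext hi h), hi, hD⟩
  have hgh : (pushY (T.R i0).rep f).IsHomogeneous d := pushY_hom hf
  have hinj : Set.InjOn (fun pr : ℕ × ℕ => T.C pr.2) B' := by
    intro x hx y hy hxy
    obtain ⟨_, hx2, hxD⟩ := hmemB' x hx
    obtain ⟨_, hy2, hyD⟩ := hmemB' y hy
    have h1 := T.hC x.2 (T.bound x hxD).2 y.2 (T.bound y hyD).2 hxy
    exact Prod.ext (hx2.trans hy2.symm) h1
  have hwnot : T.C j0 ∉ B'.image (fun pr => T.C pr.2) := by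
    intro hmem
    obtain ⟨pr, hpr, heq⟩ := Finset.mem_image.mp hmem
    obtain ⟨h1, _, hD⟩ := hmemB' pr hpr
    exact h1 (T.hC pr.2 (T.bound pr hD).2 j0 (T.bound _ h0).2 heq)
  have hV : ∀ x ∈ B'.image (fun pr => T.C pr.2), eval x.rep (pushY (T.R i0).rep f) = 0 := by
    intro x hx
    obtain ⟨pr, hpr, rfl⟩ := Finset.mem_image.mp hx
    obtain ⟨h1, h2, hD⟩ := hmemB' pr hpr
    rw [pushY_eval]
    have hz := hvan pr hD (fun h => h1 (by rw [h]))
    rw [← h2]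
    exact hz
  have hnz' : eval (T.C j0).rep (pushY (T.R i0).rep f) ≠ 0 := by
    rw [pushY_eval]; exact hnz
  have := binCount hgh hV hwnot hnz'
  rwa [Finset.card_image_of_injOn hinj] at this

end Aux9

/-- for P = R ∩ C ∈ X reduced ACM, with p+1 = deg(X ∩ R), q+1 = deg(X ∩ C),
(q,p) is the unique minimal separating degree for P, and some separator of degree (q,p)
splits into a union of (1,0)- and (0,1)-lines. -/
theorem stmt9 (k : Type) [Field k] [IsAlgClosed k] (T : Staircase k)
    (i0 j0 : ℕ) (h0 : (i0, j0) ∈ T.D)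
    (q p : ℕ) (hq : T.colCount j0 = q + 1) (hp : T.rowCount i0 = p + 1) :
    UniqueMinSepDeg (T.residual {(i0, j0)}) (T.R i0, T.C j0) (q, p) ∧
    ∃ f : S2 k, IsSeparator (T.residual {(i0, j0)}) (T.R i0, T.C j0) f (q, p) ∧
      SplitsIntoLines f := by
  classical
  have hAmem : ((i0, j0) : ℕ × ℕ) ∈ T.D.filter (fun pr => pr.2 = j0) :=
    Finset.mem_filter.mpr ⟨h0, rfl⟩
  have hBmem : ((i0, j0) : ℕ × ℕ) ∈ T.D.filter (fun pr => pr.1 = i0) :=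
    Finset.mem_filter.mpr ⟨h0, rfl⟩
  set A' := (T.D.filter fun pr => pr.2 = j0).erase (i0, j0) with hA'
  set B' := (T.D.filter fun pr => pr.1 = i0).erase (i0, j0) with hB'
  have hA'card : A'.card = q := by
    rw [hA', Finset.card_erase_of_mem hAmem]
    have hcc : (T.D.filter fun pr => pr.2 = j0).card = q + 1 := hq
    omega
  have hB'card : B'.card = p := by
    rw [hB', Finset.card_erase_of_mem hBmem]
    have hcc : (T.D.filter fun pr => pr.1 = i0).card = p + 1 := hp
    omega
  set f : S2 k := (∏ pr ∈ A', linx (T.R pr.1).rep) * (∏ pr ∈ B', liny (T.C pr.2).rep) with hf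
  have hdegf : IsWeightedHomogeneous bw f ((q : ℕ), (p : ℕ)) := by
    have hA := IsWeightedHomogeneous.prod A' (fun pr => linx (T.R pr.1).rep)
      (fun _ => (((1 : ℕ), (0 : ℕ)) : ℕ × ℕ)) (fun pr _ => linx_hom _)
    have hB := IsWeightedHomogeneous.prod B' (fun pr => liny (T.C pr.2).rep)
      (fun _ => (((0 : ℕ), (1 : ℕ)) : ℕ × ℕ)) (fun pr _ => liny_hom _)
    rw [Finset.sum_const, hA'card] at hA
    rw [Finset.sum_const, hB'card] at hB
    have hqp : q • (((1 : ℕ), (0 : ℕ)) : ℕ × ℕ) + p • (((0 : ℕ), (1 : ℕ)) : ℕ × ℕ)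
        = ((q : ℕ), (p : ℕ)) := by
      simp [Prod.ext_iff]
    rw [hf]
    have hmul := hA.mul hB
    rwa [hqp] at hmul
  have hfI : f ∈ T.residual {(i0, j0)} := by
    rw [Staircase.residual, idealOfFinset]
    refine Ideal.mem_iInf.mpr fun x => Ideal.mem_iInf.mpr fun hx => ?_
    obtain ⟨pr, hprZ, rfl⟩ := Finset.mem_image.mp hx
    obtain ⟨hprD, hprne'⟩ := Finset.mem_sdiff.mp hprZ
    rw [Finset.mem_singleton] at hprne'
    have hcol : (pr.1, j0) ∈ A' → f ∈ pointIdeal ((T.R pr.1, T.C pr.2) : PtQ k) := by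
      intro hmem
      have hdvd : linx (T.R pr.1).rep ∣ f := by
        refine Dvd.dvd.mul_right ?_ _
        have hd := Finset.dvd_prod_of_mem (fun pr' => linx (T.R pr'.1).rep) hmem
        simpa using hd
      obtain ⟨t, ht⟩ := hdvd
      rw [ht]
      refine Ideal.mul_mem_right _ _ (Ideal.subset_span ?_)
      refine ⟨⟨(((1 : ℕ), (0 : ℕ)) : ℕ × ℕ), linx_hom _⟩, ?_⟩
      show eval (Sum.elim (T.R pr.1).rep (T.C pr.2).rep) (linx (T.R pr.1).rep) = 0
      rw [eval_linx]
      simp [mul_comm]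
    have hrow : (i0, pr.2) ∈ B' → f ∈ pointIdeal ((T.R pr.1, T.C pr.2) : PtQ k) := by
      intro hmem
      have hdvd : liny (T.C pr.2).rep ∣ f := by
        refine Dvd.dvd.mul_left ?_ _
        have hd := Finset.dvd_prod_of_mem (fun pr' => liny (T.C pr'.2).rep) hmem
        simpa using hd
      obtain ⟨t, ht⟩ := hdvd
      rw [ht]
      refine Ideal.mul_mem_right _ _ (Ideal.subset_span ?_)
      refine ⟨⟨(((0 : ℕ), (1 : ℕ)) : ℕ × ℕ), liny_hom _⟩, ?_⟩
      show eval (Sum.elim (T.R pr.1).rep (T.C pr.2).rep) (liny (T.C pr.2).rep) = 0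
      rw [eval_liny]
      simp [mul_comm]
    by_cases h1 : pr.1 = i0
    · have h2 : pr.2 ≠ j0 := fun h => hprne' (Prod.ext h1 h)
      apply hrow
      refine Finset.mem_erase.mpr ⟨fun h => h2 (congrArg Prod.snd h),
        Finset.mem_filter.mpr ⟨by rw [← h1]; exact hprD, rfl⟩⟩
    · by_cases h2 : (pr.1, j0) ∈ T.D
      · apply hcol
        exact Finset.mem_erase.mpr ⟨fun h => h1 (congrArg Prod.fst h),
          Finset.mem_filter.mpr ⟨h2, rfl⟩⟩
      · have hi : i0 ≤ pr.1 := by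
          by_contra hi
          exact h2 (T.lower (i0, j0) h0 (pr.1, j0) (by omega) le_rfl)
        have hj : pr.2 < j0 := by
          by_contra hj
          exact h2 (T.lower pr hprD (pr.1, j0) le_rfl (by omega))
        apply hrow
        refine Finset.mem_erase.mpr ⟨fun h => (by omega : pr.2 ≠ j0) (congrArg Prod.snd h),
          Finset.mem_filter.mpr ⟨T.lower pr hprD (i0, pr.2) hi le_rfl, rfl⟩⟩
  have hnzP : evalPt ((T.R i0, T.C j0) : PtQ k) f ≠ 0 := by
    rw [hf, map_mul, map_prod, map_prod]
    apply mul_ne_zero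
    · rw [Finset.prod_ne_zero_iff]
      intro pr hpr
      obtain ⟨hne, hfil⟩ := Finset.mem_erase.mp hpr
      obtain ⟨hD, hj⟩ := Finset.mem_filter.mp hfil
      have h1 : pr.1 ≠ i0 := fun h => hne (Prod.ext h hj)
      have hRne : T.R i0 ≠ T.R pr.1 :=
        fun h => h1 (T.hR pr.1 (T.bound pr hD).1 i0 (T.bound _ h0).1 h.symm)
      show eval (Sum.elim (T.R i0).rep (T.C j0).rep) (linx (T.R pr.1).rep) ≠ 0
      rw [eval_linx]
      simpa using det_ne_zero hRne
    · rw [Finset.prod_ne_zero_iff]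
      intro pr hpr
      obtain ⟨hne, hfil⟩ := Finset.mem_erase.mp hpr
      obtain ⟨hD, hi⟩ := Finset.mem_filter.mp hfil
      have h2 : pr.2 ≠ j0 := fun h => hne (Prod.ext hi h)
      have hCne : T.C j0 ≠ T.C pr.2 :=
        fun h => h2 (T.hC pr.2 (T.bound pr hD).2 j0 (T.bound _ h0).2 h.symm)
      show eval (Sum.elim (T.R i0).rep (T.C j0).rep) (liny (T.C pr.2).rep) ≠ 0
      rw [eval_liny]
      simpa using det_ne_zero hCne
  have hsplit : SplitsIntoLines f := by
    refine ⟨A'.val.map (fun pr => linx (T.R pr.1).rep) +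
      B'.val.map (fun pr => liny (T.C pr.2).rep), ?_, ?_⟩
    · intro l hl
      rcases Multiset.mem_add.mp hl with h | h
      · obtain ⟨pr, _, rfl⟩ := Multiset.mem_map.mp h
        exact Or.inl (linx_hom _)
      · obtain ⟨pr, _, rfl⟩ := Multiset.mem_map.mp h
        exact Or.inr (liny_hom _)
    · rw [Multiset.prod_add, hf]
      rfl
  have hsep : IsSeparator (T.residual {(i0, j0)}) ((T.R i0, T.C j0) : PtQ k) f
      (((q : ℕ), (p : ℕ)) : ℕ × ℕ) := ⟨hdegf, hfI, hnzP⟩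
  have hmemS : (((q : ℕ), (p : ℕ)) : ℕ × ℕ) ∈
      SepDegs (T.residual {(i0, j0)}) ((T.R i0, T.C j0) : PtQ k) := ⟨f, hsep⟩
  have hlb : ∀ e ∈ SepDegs (T.residual {(i0, j0)}) ((T.R i0, T.C j0) : PtQ k),
      q ≤ e.1 ∧ p ≤ e.2 := by
    rintro e ⟨f', hfh, hfI', hfnz⟩
    have hvan : ∀ pr ∈ T.D, pr ≠ (i0, j0) → evalPt (T.R pr.1, T.C pr.2) f' = 0 := by
      intro pr hpr hne
      have hx : ((T.R pr.1, T.C pr.2) : PtQ k) ∈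
          (T.D \ {(i0, j0)}).image (fun pp => (T.R pp.1, T.C pp.2)) :=
        Finset.mem_image_of_mem _ (Finset.mem_sdiff.mpr ⟨hpr, by simpa using hne⟩)
      have hmem : f' ∈ pointIdeal ((T.R pr.1, T.C pr.2) : PtQ k) := by
        have h1 := hfI'
        rw [Staircase.residual, idealOfFinset] at h1
        exact Ideal.mem_iInf.mp (Ideal.mem_iInf.mp h1 _) hx
      have hker : pointIdeal ((T.R pr.1, T.C pr.2) : PtQ k) ≤
          RingHom.ker (evalPt ((T.R pr.1, T.C pr.2) : PtQ k)) :=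
        Ideal.span_le.mpr fun g hg => RingHom.mem_ker.mpr hg.2
      exact RingHom.mem_ker.mp (hker hmem)
    have hfh' : IsWeightedHomogeneous bw f' (e.1, e.2) := hfh
    constructor
    · have hcb := sep_col_bound T h0 hfh' hvan hfnz
      rw [← hA'] at hcb
      omega
    · have hrb := sep_row_bound T h0 hfh' hvan hfnz
      rw [← hB'] at hrb
      omega
  refine ⟨⟨⟨hmemS, ?_⟩, ?_⟩, f, hsep, hsplit⟩
  · intro e he hlt
    have hle : (((q : ℕ), (p : ℕ)) : ℕ × ℕ) ≤ e := Prod.le_def.mpr ⟨(hlb e he).1, (hlb e he).2⟩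
    exact absurd (lt_of_lt_of_le hlt hle) (lt_irrefl e)
  · rintro e ⟨hemem, hemin⟩
    have hle : (((q : ℕ), (p : ℕ)) : ℕ × ℕ) ≤ e :=
      Prod.le_def.mpr ⟨(hlb e hemem).1, (hlb e hemem).2⟩
    by_contra hne
    exact hemin ((q : ℕ), (p : ℕ)) hmemS (lt_of_le_of_ne hle (fun h => hne h.symm))
end
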